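/- arXiv:2511.17995 — 6 statements merged into one kernel-verified Lean document; each statement's English description precedes it below -/
import Mathlib

section
/- Let m ≥ 1 and a ∈ ℂ^m. Let M be a nonzero Whittaker Weyl module of type a (with operators T_1,…,T_m, D_1,…,D_m such that each D_i − a_i·id is locally nilpotent) which is simple in the sense that the only ℂ-subspaces of M invariant under all T_i and all D_i are 0 and M. Then M is isomorphic to the twisted polynomial module A^a: there exists a ℂ-linear bijection φ : A → M such that φ(t_i·p) = T_i(φ(p)) and φ(∂p/∂t_i + a_i·p) = D_i(φ(p)) for all p ∈ A and all i ∈ {1,…,m}. -/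
open MvPolynomial

lemma aux_td_pderiv {σ : Type*} [DecidableEq σ] (i : σ) (p : MvPolynomial σ ℂ) :
    (pderiv i p).totalDegree ≤ p.totalDegree - 1 := by
  classical
  conv_lhs => rw [p.as_sum, map_sum]
  refine (MvPolynomial.totalDegree_finset_sum _ _).trans (Finset.sup_le ?_)
  intro e he
  rw [pderiv_monomial]
  by_cases h0 : e i = 0
  · simp [h0]
  · refine (totalDegree_monomial_le _ _).trans ?_
    have hle : Finsupp.single i 1 ≤ e := Finsupp.single_le_iff.mpr (Nat.one_le_iff_ne_zero.mpr h0)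
    have hsum : ((e - Finsupp.single i 1).sum fun _ n => n) + 1 = e.sum fun _ n => n := by
      have h1 : e - Finsupp.single i 1 + Finsupp.single i 1 = e := tsub_add_cancel_of_le hle
      calc ((e - Finsupp.single i 1).sum fun _ n => n) + 1
          = ((e - Finsupp.single i 1).sum fun _ n => n) +
            ((Finsupp.single i 1).sum fun _ n => n) := by
            rw [Finsupp.sum_single_index rfl]
        _ = ((e - Finsupp.single i 1 + Finsupp.single i 1).sum fun _ n => n) :=
            (Finsupp.sum_add_index' (fun _ => rfl) (fun _ _ _ => rfl)).symm
        _ = e.sum fun _ n => n := by rw [h1]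
    have : (e.sum fun _ n => n) ≤ p.totalDegree := le_totalDegree he
    simp only [Function.id_def]
    omega

lemma aux_coeff_pderiv {σ : Type*} [DecidableEq σ] (i : σ) (p : MvPolynomial σ ℂ)
    (d : σ →₀ ℕ) (hd : d i ≠ 0) :
    coeff (d - Finsupp.single i 1) (pderiv i p) = (d i : ℂ) * coeff d p := by
  conv_lhs => rw [p.as_sum, map_sum]
  rw [coeff_sum]
  rw [Finset.sum_eq_single d]
  · rw [pderiv_monomial, coeff_monomial, if_pos rfl, mul_comm]
  · intro e he hne
    rw [pderiv_monomial, coeff_monomial]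
    by_cases hei : e i = 0
    · simp only [hei, Nat.cast_zero, mul_zero, ite_self]
    · rw [if_neg]
      intro hcond
      apply hne
      ext j
      have := DFunLike.congr_fun hcond j
      simp only [Finsupp.tsub_apply, Finsupp.single_apply] at this
      by_cases hj : i = j
      · subst hj
        rw [if_pos rfl] at this
        omega
      · rw [if_neg hj] at this
        simpa using this
  · intro hd'
    rw [MvPolynomial.notMem_support_iff] at hd'
    rw [hd']
    simp

lemma aux_const_of_pderiv_zero {σ : Type*} [DecidableEq σ] (p : MvPolynomial σ ℂ)
    (h : ∀ i, pderiv i p = 0) : p = C (coeff 0 p) := by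
  ext d
  rcases eq_or_ne d 0 with rfl | hd
  · simp
  · rw [coeff_C, if_neg (Ne.symm hd)]
    obtain ⟨i, hi⟩ : ∃ i, d i ≠ 0 := by
      by_contra hall; push_neg at hall; exact hd (Finsupp.ext hall)
    have h2 := aux_coeff_pderiv i p d hi
    rw [h i, coeff_zero] at h2
    have hne : (d i : ℂ) ≠ 0 := Nat.cast_ne_zero.mpr hi
    rcases mul_eq_zero.mp h2.symm with h | h
    · exact absurd h hne
    · exact h

noncomputable def weylAeval {m : ℕ} {M : Type*} [AddCommGroup M] [Module ℂ M]
    (T : Fin m → Module.End ℂ M) (hTT : ∀ i j, T i * T j = T j * T i) :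
    MvPolynomial (Fin m) ℂ →ₐ[ℂ] Module.End ℂ M :=
  letI : CommRing (Algebra.adjoin ℂ (Set.range T)) :=
    Algebra.adjoinCommRingOfComm ℂ (by
      rintro _ ⟨i, rfl⟩ _ ⟨j, rfl⟩; exact hTT i j)
  ((Algebra.adjoin ℂ (Set.range T)).val).comp
    (MvPolynomial.aeval fun i =>
      (⟨T i, Algebra.subset_adjoin ⟨i, rfl⟩⟩ : Algebra.adjoin ℂ (Set.range T)))

lemma weylAeval_X {m : ℕ} {M : Type*} [AddCommGroup M] [Module ℂ M]
    (T : Fin m → Module.End ℂ M) (hTT : ∀ i j, T i * T j = T j * T i) (i : Fin m) :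
    weylAeval T hTT (X i) = T i := by
  simp [weylAeval]

/-- Any nonzero simple Whittaker Weyl module of type `a` is isomorphic to
the twisted polynomial module `A^a`. -/
theorem simple_whittaker_weyl_module_iso_twisted_polynomials
    (m : ℕ) (hm : 1 ≤ m) (a : Fin m → ℂ)
    (M : Type*) [AddCommGroup M] [Module ℂ M] [Nontrivial M]
    (T D : Fin m → Module.End ℂ M)
    (hTT : ∀ i j, T i * T j = T j * T i)
    (hDD : ∀ i j, D i * D j = D j * D i)
    (hDT : ∀ i j, D i * T j - T j * D i = if i = j then 1 else 0)
    (hnil : ∀ (i : Fin m) (v : M), ∃ k : ℕ, ((D i - a i • 1) ^ k) v = 0)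
    (hsimple : ∀ N : Submodule ℂ M,
      (∀ i, ∀ v ∈ N, T i v ∈ N ∧ D i v ∈ N) → N = ⊥ ∨ N = ⊤) :
    ∃ φ : MvPolynomial (Fin m) ℂ ≃ₗ[ℂ] M,
      ∀ (i : Fin m) (p : MvPolynomial (Fin m) ℂ),
        φ (X i * p) = T i (φ p) ∧ φ (pderiv i p + a i • p) = D i (φ p) := by
  classical
  set E : Fin m → Module.End ℂ M := fun i => D i - a i • 1 with hE
  -- central scalars
  have hcentral : ∀ (c : ℂ) (f : Module.End ℂ M), Commute (c • (1 : Module.End ℂ M)) f := by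
    intro c f
    unfold Commute SemiconjBy
    rw [smul_mul_assoc, one_mul, mul_smul_comm, mul_one]
  -- commutator relations for E
  have hET : ∀ i j, E i * T j = T j * E i + if i = j then 1 else 0 := by
    intro i j
    have h1 : E i * T j - T j * E i = D i * T j - T j * D i := by
      simp only [hE]
      rw [sub_mul, mul_sub, smul_mul_assoc, one_mul, mul_smul_comm, mul_one]
      abel
    have h2 := h1.trans (hDT i j)
    have := sub_eq_iff_eq_add'.mp h2
    rw [this]
  have hEE : ∀ i j, Commute (E i) (E j) := by
    intro i j
    have h0 : Commute (D i) (D j) := hDD i j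
    have h1 : Commute (D i) (E j) := h0.sub_right ((hcentral (a j) (D i)).symm)
    exact h1.sub_left (hcentral (a i) (E j))
  -- existence of a nonzero Whittaker vector
  obtain ⟨w, hw0, hwE⟩ : ∃ w : M, w ≠ 0 ∧ ∀ i : Fin m, E i w = 0 := by
    suffices h : ∀ n : ℕ, ∃ w : M, w ≠ 0 ∧ ∀ i : Fin m, (i : ℕ) < n → E i w = 0 by
      obtain ⟨w, hw0, hw⟩ := h m
      exact ⟨w, hw0, fun i => hw i i.isLt⟩
    intro n
    induction n with
    | zero =>
      obtain ⟨v, hv⟩ := exists_ne (0 : M)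
      exact ⟨v, hv, fun i h => absurd h (Nat.not_lt_zero _)⟩
    | succ n ih =>
      obtain ⟨w, hw0, hw⟩ := ih
      by_cases hn : n < m
      · set i₀ : Fin m := ⟨n, hn⟩
        have hex : ∃ k, ((E i₀) ^ k) w = 0 := hnil i₀ w
        let k₀ := Nat.find hex
        have hk₀ : ((E i₀) ^ k₀) w = 0 := Nat.find_spec hex
        have hk₀0 : k₀ ≠ 0 := by
          intro h
          rw [h, pow_zero] at hk₀
          exact hw0 hk₀
        refine ⟨((E i₀) ^ (k₀ - 1)) w, ?_, ?_⟩
        · exact fun hzero => Nat.find_min hex (Nat.sub_lt (Nat.pos_of_ne_zero hk₀0) one_pos) hzero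
        · intro i hi
          rcases Nat.lt_succ_iff_lt_or_eq.mp hi with h | h
          · have hc : E i * (E i₀) ^ (k₀ - 1) = (E i₀) ^ (k₀ - 1) * E i :=
              ((hEE i i₀).pow_right _).eq
            calc E i (((E i₀) ^ (k₀ - 1)) w) = (E i * (E i₀) ^ (k₀ - 1)) w := rfl
              _ = ((E i₀) ^ (k₀ - 1) * E i) w := by rw [hc]
              _ = ((E i₀) ^ (k₀ - 1)) (E i w) := rfl
              _ = 0 := by rw [hw i h, map_zero]
          · have hii : i = i₀ := Fin.ext h
            rw [hii]
            calc E i₀ (((E i₀) ^ (k₀ - 1)) w) = ((E i₀) ^ (k₀ - 1) * E i₀) w := by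
                  rw [(Commute.refl (E i₀)).pow_left _]; rfl
              _ = ((E i₀) ^ (k₀ - 1 + 1)) w := by rw [pow_succ]
              _ = 0 := by
                  rw [Nat.sub_add_cancel (Nat.one_le_iff_ne_zero.mpr hk₀0)]
                  exact hk₀
      · exact ⟨w, hw0, fun i _ => hw i (lt_of_lt_of_le i.isLt (le_of_not_gt hn))⟩
  -- the linear map from polynomials to M
  let φ₀ : MvPolynomial (Fin m) ℂ →ₗ[ℂ] M :=
    { toFun := fun p => weylAeval T hTT p w
      map_add' := fun p q => by simp [map_add]
      map_smul' := fun c p => by simp [map_smul] }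
  have hφ₀ : ∀ p, φ₀ p = weylAeval T hTT p w := fun _ => rfl
  -- commutator of E with the image of polynomials
  have hcomm : ∀ (i : Fin m) (p : MvPolynomial (Fin m) ℂ),
      E i * weylAeval T hTT p = weylAeval T hTT p * E i + weylAeval T hTT (pderiv i p) := by
    intro i p
    induction p using MvPolynomial.induction_on with
    | C c =>
      rw [pderiv_C, map_zero, add_zero]
      have hC : weylAeval T hTT (C c) = algebraMap ℂ (Module.End ℂ M) c := by
        rw [← MvPolynomial.algebraMap_eq, AlgHom.commutes]
      rw [hC]
      exact (Algebra.commutes c (E i)).symm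
    | add p q hp hq =>
      rw [map_add, mul_add, hp, hq, map_add, map_add, add_mul]
      abel
    | mul_X p j hp =>
      have h1 := hET i j
      by_cases hij : i = j
      · subst hij
        rw [if_pos rfl] at h1
        rw [map_mul, weylAeval_X, pderiv_mul, pderiv_X_self, mul_one, map_add, map_mul,
          weylAeval_X]
        rw [← mul_assoc, hp, add_mul, mul_assoc _ (E i) (T i), h1, mul_add, mul_one, ← mul_assoc]
        abel
      · rw [if_neg hij, add_zero] at h1
        rw [map_mul, weylAeval_X, pderiv_mul, pderiv_X_of_ne (Ne.symm hij), mul_zero, add_zero,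
          map_mul, weylAeval_X]
        rw [← mul_assoc, hp, add_mul, mul_assoc _ (E i) (T j), h1, ← mul_assoc]
  have hφE : ∀ (i : Fin m) (p : MvPolynomial (Fin m) ℂ), E i (φ₀ p) = φ₀ (pderiv i p) := by
    intro i p
    have h := congrArg (fun f : Module.End ℂ M => f w) (hcomm i p)
    simp only [Module.End.mul_apply, LinearMap.add_apply] at h
    rw [hwE i, map_zero, zero_add] at h
    exact h
  have hφT : ∀ (i : Fin m) (p : MvPolynomial (Fin m) ℂ), φ₀ (X i * p) = T i (φ₀ p) := by
    intro i p
    rw [hφ₀, map_mul, weylAeval_X]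
    rfl
  have hφD : ∀ (i : Fin m) (p : MvPolynomial (Fin m) ℂ),
      φ₀ (pderiv i p + a i • p) = D i (φ₀ p) := by
    intro i p
    rw [map_add, map_smul, ← hφE i p]
    simp only [hE, LinearMap.sub_apply, LinearMap.smul_apply, Module.End.one_apply]
    abel
  -- φ₀ of constants
  have hCw : ∀ c : ℂ, φ₀ (C c) = c • w := by
    intro c
    rw [hφ₀, ← MvPolynomial.algebraMap_eq, AlgHom.commutes]
    simp [Module.algebraMap_end_apply]
  -- surjectivity via simplicity
  have hsurj : Function.Surjective φ₀ := by
    have hinv : ∀ i, ∀ v ∈ LinearMap.range φ₀, T i v ∈ LinearMap.range φ₀ ∧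
        D i v ∈ LinearMap.range φ₀ := by
      rintro i v ⟨p, rfl⟩
      exact ⟨⟨X i * p, hφT i p⟩, ⟨pderiv i p + a i • p, hφD i p⟩⟩
    rcases hsimple (LinearMap.range φ₀) hinv with h | h
    · exfalso
      have hwmem : w ∈ LinearMap.range φ₀ := ⟨C 1, by rw [hCw, one_smul]⟩
      rw [h, Submodule.mem_bot] at hwmem
      exact hw0 hwmem
    · intro v
      have : v ∈ LinearMap.range φ₀ := h ▸ Submodule.mem_top
      exact this
  -- constants with totalDegree zero
  have hconst : ∀ p : MvPolynomial (Fin m) ℂ, p.totalDegree = 0 → p = C (coeff 0 p) := by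
    intro p hp
    ext d
    rcases eq_or_ne d 0 with rfl | hd
    · simp
    · rw [coeff_C, if_neg (Ne.symm hd)]
      by_contra hc
      obtain ⟨x, hx⟩ : ∃ x, d x ≠ 0 := by
        by_contra hall; push_neg at hall; exact hd (Finsupp.ext hall)
      exact hx (((totalDegree_eq_zero_iff (Fin m) p).mp hp) d (mem_support_iff.mpr hc) x)
  -- injectivity
  have hker : ∀ (n : ℕ) (p : MvPolynomial (Fin m) ℂ), p.totalDegree ≤ n → φ₀ p = 0 → p = 0 := by
    intro n
    induction n with
    | zero =>
      intro p hdeg h0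
      have hpc := hconst p (Nat.le_zero.mp hdeg)
      rw [hpc, hCw] at h0
      rcases smul_eq_zero.mp h0 with h | h
      · rw [hpc, h, map_zero]
      · exact absurd h hw0
    | succ n ih =>
      intro p hdeg h0
      have hder : ∀ i, pderiv i p = 0 := by
        intro i
        refine ih _ (le_trans (aux_td_pderiv i p) (by omega)) ?_
        rw [← hφE i p, h0, map_zero]
      have hpc := aux_const_of_pderiv_zero p hder
      rw [hpc, hCw] at h0
      rcases smul_eq_zero.mp h0 with h | h
      · rw [hpc, h, map_zero]
      · exact absurd h hw0
  have hinj : Function.Injective φ₀ := by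
    intro p q h
    have h1 : φ₀ (p - q) = 0 := by rw [map_sub, h, sub_self]
    have := hker (p - q).totalDegree (p - q) le_rfl h1
    exact sub_eq_zero.mp this
  refine ⟨LinearEquiv.ofBijective φ₀ ⟨hinj, hsurj⟩, fun i p => ⟨?_, ?_⟩⟩
  · exact hφT i p
  · exact hφD i p
end

section
/- Let m ≥ 1 and a ∈ ℂ^m. Let M be a Whittaker Weyl module of type a with operators T_i, D_i. Suppose f : A → M is an injective ℂ-linear map and g : M → A is a surjective ℂ-linear map such that range(f) = ker(g), and both f and g intertwine the twisted A^a-structure with (T_i, D_i), i.e., f(t_i·p) = T_i f(p), f(∂p/∂t_i + a_i·p) = D_i f(p), g(T_i v) = t_i·g(v), and g(D_i v) = ∂(g(v))/∂t_i + a_i·g(v) for all i, p ∈ A, v ∈ M. Then the extension splits: there exists a ℂ-linear map h : A → M with h(t_i·p) = T_i h(p), h(∂p/∂t_i + a_i·p) = D_i h(p), and g ∘ h = id_A. (In other words, every self-extension of A^a in the category of Whittaker Weyl modules of type a splits.) -/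
open MvPolynomial

noncomputable def Jk (m k : ℕ) : MvPolynomial (Fin m) ℂ →ₗ[ℂ] MvPolynomial (Fin m) ℂ :=
  (basisMonomials (Fin m) ℂ).constr ℂ
    (fun s => (((s.sum fun _ e => e : ℕ) : ℂ) + k)⁻¹ • monomial s 1)

lemma Jk_monomial (m k : ℕ) (s : Fin m →₀ ℕ) (c : ℂ) :
    Jk m k (monomial s c) = (((s.sum fun _ e => e : ℕ) : ℂ) + k)⁻¹ • monomial s c := by
  have hb : (basisMonomials (Fin m) ℂ) s = monomial s 1 :=
    congrFun (coe_basisMonomials (Fin m) ℂ) s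
  have h1 : (monomial s c : MvPolynomial (Fin m) ℂ) = c • (basisMonomials (Fin m) ℂ) s := by
    rw [hb, smul_monomial, smul_eq_mul, mul_one]
  rw [h1, map_smul, Jk, Module.Basis.constr_basis, smul_comm, hb, smul_monomial, smul_eq_mul, mul_one]

lemma deg_sub_add_one (m : ℕ) (s : Fin m →₀ ℕ) (j : Fin m) (h : s j ≠ 0) :
    ((s - Finsupp.single j 1).sum fun _ e => e) + 1 = s.sum fun _ e => e := by
  have hs : (s - Finsupp.single j 1) + Finsupp.single j 1 = s := by
    ext k
    rcases eq_or_ne k j with rfl | hk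
    · simp only [Finsupp.add_apply, Finsupp.tsub_apply, Finsupp.single_eq_same]
      omega
    · simp [Finsupp.tsub_apply, Finsupp.single_apply, Ne.symm hk]
  conv_rhs => rw [← hs]
  rw [Finsupp.sum_add_index' (fun _ => rfl) (fun _ _ _ => rfl)]
  simp [Finsupp.sum_single_index]

lemma pderiv_Jk (m : ℕ) (j : Fin m) (p : MvPolynomial (Fin m) ℂ) :
    pderiv j (Jk m 1 p) = Jk m 2 (pderiv j p) := by
  induction p using MvPolynomial.induction_on' with
  | add p q hp hq => simp only [map_add, hp, hq]
  | monomial s c =>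
    rw [Jk_monomial, Derivation.map_smul, pderiv_monomial, Jk_monomial]
    by_cases h : s j = 0
    · simp [h]
    · congr 1
      have h2 := deg_sub_add_one m s j h
      rw [← h2]
      push_cast
      ring

lemma euler_identity (m : ℕ) (p : MvPolynomial (Fin m) ℂ) :
    Jk m 1 p + ∑ i, X i * Jk m 2 (pderiv i p) = p := by
  induction p using MvPolynomial.induction_on' with
  | add p q hp hq =>
    simp only [map_add, mul_add, Finset.sum_add_distrib]
    rw [add_add_add_comm, hp, hq]
  | monomial s c =>
    have key : ∀ i : Fin m, X i * Jk m 2 (pderiv i (monomial s c)) =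
        (((((s.sum fun _ e => e : ℕ) : ℂ) + 1)⁻¹ * ((s i : ℕ) : ℂ)) • monomial s c) := by
      intro i
      by_cases h : s i = 0
      · simp [pderiv_monomial, h]
      · rw [pderiv_monomial, Jk_monomial, mul_smul_comm]
        have hX : (X i : MvPolynomial (Fin m) ℂ) * monomial (s - Finsupp.single i 1) (c * (s i : ℕ)) =
            monomial (Finsupp.single i 1 + (s - Finsupp.single i 1)) (c * (s i : ℕ)) := by
          rw [monomial_single_add, pow_one]
        have hss : Finsupp.single i 1 + (s - Finsupp.single i 1) = s := by
          ext k
          rcases eq_or_ne k i with rfl | hk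
          · simp only [Finsupp.add_apply, Finsupp.tsub_apply, Finsupp.single_eq_same]
            omega
          · simp [Finsupp.tsub_apply, Finsupp.single_apply, Ne.symm hk]
        rw [hX, hss]
        have h2 := deg_sub_add_one m s i h
        rw [← h2]
        rw [smul_monomial, smul_monomial]
        congr 1
        simp only [smul_eq_mul]
        push_cast
        ring
    rw [Finset.sum_congr rfl (fun i _ => key i), Jk_monomial]
    rw [← Finset.sum_smul, ← Finset.mul_sum, ← Nat.cast_sum]
    have hdeg : (s.sum fun _ e => e) = ∑ i : Fin m, s i :=
      Finsupp.sum_fintype _ _ (fun _ => rfl)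
    rw [← hdeg, ← add_smul]
    have hne : (((s.sum fun _ e => e : ℕ) : ℂ) + 1) ≠ 0 :=
      Nat.cast_add_one_ne_zero _
    have habs : ∀ d : ℂ, d + 1 ≠ 0 → (d + 1)⁻¹ + (d + 1)⁻¹ * d = 1 := by
      intro d hd
      field_simp
      ring
    have hscal : (((s.sum fun _ e => e : ℕ) : ℂ) + ((1:ℕ):ℂ))⁻¹ +
        (((s.sum fun _ e => e : ℕ) : ℂ) + 1)⁻¹ * ((s.sum fun _ e => e : ℕ) : ℂ) = 1 := by
      rw [Nat.cast_one]
      exact habs _ hne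
    rw [hscal, one_smul]

lemma poincare (m : ℕ) (q : Fin m → MvPolynomial (Fin m) ℂ)
    (hq : ∀ i j, pderiv i (q j) = pderiv j (q i)) :
    ∃ Q, ∀ j, pderiv j Q = q j := by
  refine ⟨∑ i, X i * Jk m 1 (q i), fun j => ?_⟩
  rw [map_sum]
  have step : ∀ i : Fin m, pderiv j (X i * Jk m 1 (q i)) =
      (if i = j then Jk m 1 (q j) else 0) + X i * Jk m 2 (pderiv i (q j)) := by
    intro i
    rw [pderiv_mul, pderiv_Jk, hq j i]
    congr 1
    rcases eq_or_ne i j with rfl | hij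
    · simp
    · simp [pderiv_X_of_ne hij, hij]
  rw [Finset.sum_congr rfl (fun i _ => step i), Finset.sum_add_distrib,
    Finset.sum_ite_eq' Finset.univ j (fun _ => Jk m 1 (q j))]
  simp only [Finset.mem_univ, if_pos]
  exact euler_identity m (q j)

/-- Every self-extension of the twisted polynomial Weyl module `A^a`
in the category of Whittaker Weyl modules of type `a` splits. -/
theorem self_extension_of_twisted_polynomials_splits
    (m : ℕ) (hm : 1 ≤ m) (a : Fin m → ℂ)
    (M : Type*) [AddCommGroup M] [Module ℂ M]
    (T D : Fin m → Module.End ℂ M)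
    (hTT : ∀ i j, T i * T j = T j * T i)
    (hDD : ∀ i j, D i * D j = D j * D i)
    (hDT : ∀ i j, D i * T j - T j * D i = if i = j then 1 else 0)
    (hnil : ∀ (i : Fin m) (v : M), ∃ k : ℕ, ((D i - a i • 1) ^ k) v = 0)
    (f : MvPolynomial (Fin m) ℂ →ₗ[ℂ] M) (g : M →ₗ[ℂ] MvPolynomial (Fin m) ℂ)
    (hf : Function.Injective f) (hg : Function.Surjective g)
    (hfg : LinearMap.range f = LinearMap.ker g)
    (hfT : ∀ (i : Fin m) (p : MvPolynomial (Fin m) ℂ), f (X i * p) = T i (f p))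
    (hfD : ∀ (i : Fin m) (p : MvPolynomial (Fin m) ℂ),
      f (pderiv i p + a i • p) = D i (f p))
    (hgT : ∀ (i : Fin m) (v : M), g (T i v) = X i * g v)
    (hgD : ∀ (i : Fin m) (v : M), g (D i v) = pderiv i (g v) + a i • g v) :
    ∃ h : MvPolynomial (Fin m) ℂ →ₗ[ℂ] M,
      (∀ (i : Fin m) (p : MvPolynomial (Fin m) ℂ), h (X i * p) = T i (h p)) ∧
      (∀ (i : Fin m) (p : MvPolynomial (Fin m) ℂ),
        h (pderiv i p + a i • p) = D i (h p)) ∧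
      g ∘ₗ h = LinearMap.id := by
  classical
  set E : Fin m → Module.End ℂ M := fun i => D i - a i • 1 with hE
  -- basic applied facts
  have hEapp : ∀ (i : Fin m) (u : M), E i u = D i u - a i • u := by
    intro i u
    simp [hE, LinearMap.sub_apply, LinearMap.smul_apply, Module.End.one_apply]
  have hfE : ∀ (i : Fin m) (p : MvPolynomial (Fin m) ℂ), f (pderiv i p) = E i (f p) := by
    intro i p
    have h1 : f (pderiv i p) + a i • f p = D i (f p) := by
      rw [← map_smul, ← map_add]; exact hfD i p
    rw [hEapp, ← h1]; abel
  have hgE : ∀ (i : Fin m) (v : M), g (E i v) = pderiv i (g v) := by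
    intro i v
    rw [hEapp, map_sub, map_smul, hgD]; abel
  have hDDv : ∀ (i j : Fin m) (u : M), D i (D j u) = D j (D i u) := by
    intro i j u
    have := DFunLike.congr_fun (hDD i j) u
    simpa [Module.End.mul_apply] using this
  have hEEv : ∀ (i j : Fin m) (u : M), E i (E j u) = E j (E i u) := by
    intro i j u
    rw [hEapp, hEapp, hEapp, hEapp, map_sub, map_sub, map_smul, map_smul, hDDv i j u]
    module
  have hDTv : ∀ (i j : Fin m) (u : M), D i (T j u) = T j (D i u) + (if i = j then u else 0) := by
    intro i j u
    have h0 := DFunLike.congr_fun (hDT i j) u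
    simp only [LinearMap.sub_apply, Module.End.mul_apply] at h0
    rw [sub_eq_iff_eq_add] at h0
    rw [h0, add_comm]
    congr 1
    rcases eq_or_ne i j with rfl | hij
    · simp
    · simp [hij]
  have hETv : ∀ (i j : Fin m) (u : M), E i (T j u) = T j (E i u) + (if i = j then u else 0) := by
    intro i j u
    rw [hEapp, hDTv i j u, hEapp, map_sub, map_smul]
    abel
  -- construct the Whittaker vector w
  obtain ⟨v, hv⟩ := hg 1
  have hEker : ∀ i : Fin m, ∃ p, f p = E i v := by
    intro i
    have hmem : E i v ∈ LinearMap.ker g := by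
      rw [LinearMap.mem_ker, hgE, hv, pderiv_one]
    rw [← hfg] at hmem
    exact hmem
  choose q hqf using hEker
  have hclosed : ∀ i j, pderiv i (q j) = pderiv j (q i) := by
    intro i j
    apply hf
    rw [hfE, hfE, hqf, hqf, hEEv i j v]
  obtain ⟨Q, hQ⟩ := poincare m q hclosed
  set w : M := v - f Q with hw
  have hgw : g w = 1 := by
    have hfQ : g (f Q) = 0 := by
      have : f Q ∈ LinearMap.ker g := hfg ▸ LinearMap.mem_range_self f Q
      exact LinearMap.mem_ker.mp this
    rw [hw, map_sub, hv, hfQ, sub_zero]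
  have hEw : ∀ i, E i w = 0 := by
    intro i
    rw [hw, map_sub, ← hqf i, ← hfE, hQ, sub_self]
  -- build the splitting map h
  letI : CommRing (Algebra.adjoin ℂ (Set.range T)) :=
    Algebra.adjoinCommRingOfComm ℂ (by rintro x ⟨i, rfl⟩ y ⟨j, rfl⟩; exact hTT i j)
  let TT : Fin m → Algebra.adjoin ℂ (Set.range T) :=
    fun i => ⟨T i, Algebra.subset_adjoin (Set.mem_range_self i)⟩
  let hl : MvPolynomial (Fin m) ℂ →ₗ[ℂ] M :=
    { toFun := fun p => ((aeval TT p : Algebra.adjoin ℂ (Set.range T)) : Module.End ℂ M) w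
      map_add' := by intro p p'; simp
      map_smul' := by intro c p; simp }
  have h1 : ∀ (i : Fin m) (p : MvPolynomial (Fin m) ℂ), hl (X i * p) = T i (hl p) := by
    intro i p
    show ((aeval TT (X i * p) : Algebra.adjoin ℂ (Set.range T)) : Module.End ℂ M) w = _
    rw [map_mul, aeval_X]
    rfl
  have h2 : ∀ c : ℂ, hl (C c) = c • w := by
    intro c
    show ((aeval TT (C c) : Algebra.adjoin ℂ (Set.range T)) : Module.End ℂ M) w = _
    rw [aeval_C]
    simp [Algebra.algebraMap_eq_smul_one]
  have key2 : ∀ p, g (hl p) = p := by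
    intro p
    induction p using MvPolynomial.induction_on with
    | C c => rw [h2, map_smul, hgw, smul_eq_C_mul, mul_one]
    | add p p' hp hp' => rw [map_add, map_add, hp, hp']
    | mul_X p i hp => rw [mul_comm, h1, hgT, hp, mul_comm]
  have key3 : ∀ (i : Fin m) (p : MvPolynomial (Fin m) ℂ), hl (pderiv i p) = E i (hl p) := by
    intro i p
    induction p using MvPolynomial.induction_on with
    | C c => rw [pderiv_C, map_zero, h2, map_smul, hEw, smul_zero]
    | add p p' hp hp' => rw [map_add, map_add, map_add, hp, hp', ← map_add]
    | mul_X p j hp =>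
      rw [pderiv_mul]
      rcases eq_or_ne i j with rfl | hij
      · rw [pderiv_X_self, mul_one, map_add, mul_comm (pderiv i p) (X i), h1, hp,
          mul_comm p (X i), h1, hETv i i (hl p), if_pos rfl]
      · rw [pderiv_X_of_ne (Ne.symm hij), mul_zero, add_zero,
          mul_comm (pderiv i p) (X j), h1, hp, mul_comm p (X j), h1,
          hETv i j (hl p), if_neg hij, add_zero]
  refine ⟨hl, h1, ?_, ?_⟩
  · intro i p
    rw [map_add, map_smul, key3 i p, hEapp]
    abel
  · apply LinearMap.ext
    intro p
    simp [key2 p]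
end

section
/- Let m ≥ 1 and a ∈ ℂ^m, and let M be a Whittaker Weyl module of type a (operators T_i, D_i with each D_i − a_i·id locally nilpotent). Let Wh_a(M) = ⋂_{i=1}^m ker(D_i − a_i·id) be the space of Whittaker vectors. Then the ℂ-linear map ψ : A ⊗_ℂ Wh_a(M) → M determined by ψ(t_1^{r_1}···t_m^{r_m} ⊗ v) = T_1^{r_1}···T_m^{r_m} v is bijective. -/
open MvPolynomial TensorProduct

section Aux
variable {m : ℕ} {M : Type*} [AddCommGroup M] [Module ℂ M]

/-- The product `F 1 ^ r 1 * ⋯ * F m ^ r m` for a commuting family `F`. -/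
noncomputable def WWfpow (F : Fin m → Module.End ℂ M)
    (hF : ∀ i j, Commute (F i) (F j)) (r : Fin m →₀ ℕ) : Module.End ℂ M :=
  Finset.univ.noncommProd (fun i => F i ^ r i)
    (fun i _ j _ _ => (hF i j).pow_pow _ _)

theorem WWfpow_ofFn (F : Fin m → Module.End ℂ M)
    (hF : ∀ i j, Commute (F i) (F j)) (r : Fin m →₀ ℕ) :
    (List.ofFn fun i => F i ^ r i).prod = WWfpow F hF r := by
  rw [List.ofFn_eq_map, WWfpow]
  rw [← Finset.noncommProd_toFinset (List.finRange m) (fun i => F i ^ r i)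
    (fun x _ y _ _ => (hF x y).pow_pow _ _) (List.nodup_finRange m)]
  exact (Finset.noncommProd_congr (by simp [List.toFinset_finRange]) (fun _ _ => rfl) _).symm

theorem WWfpow_zero (F : Fin m → Module.End ℂ M)
    (hF : ∀ i j, Commute (F i) (F j)) : WWfpow F hF 0 = 1 := by
  rw [WWfpow]
  exact (Finset.noncommProd_eq_pow_card _ _ _ 1 (fun x _ => by simp)).trans (one_pow _)

theorem WWfpow_peel (F : Fin m → Module.End ℂ M)
    (hF : ∀ i j, Commute (F i) (F j)) (i : Fin m) (r : Fin m →₀ ℕ) :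
    WWfpow F hF r = F i ^ r i *
      (Finset.univ.erase i).noncommProd (fun j => F j ^ r j)
        (fun x _ y _ _ => (hF x y).pow_pow _ _) :=
  (Finset.mul_noncommProd_erase _ (Finset.mem_univ i) _ _).symm

theorem WWfpow_commute (F : Fin m → Module.End ℂ M)
    (hF : ∀ i j, Commute (F i) (F j)) (i : Fin m) (r : Fin m →₀ ℕ) :
    Commute (F i) (WWfpow F hF r) :=
  Finset.noncommProd_commute _ _ _ _ (fun j _ => (hF i j).pow_right _)

theorem WWfpow_single_add (F : Fin m → Module.End ℂ M)
    (hF : ∀ i j, Commute (F i) (F j)) (i : Fin m) (r : Fin m →₀ ℕ) :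
    WWfpow F hF (Finsupp.single i 1 + r) = F i * WWfpow F hF r := by
  rw [WWfpow_peel F hF i (Finsupp.single i 1 + r), WWfpow_peel F hF i r]
  have h1 : (Finsupp.single i 1 + r : Fin m →₀ ℕ) i = 1 + r i := by simp
  have h2 : (Finset.univ.erase i).noncommProd
        (fun j => F j ^ (Finsupp.single i 1 + r : Fin m →₀ ℕ) j)
        (fun x _ y _ _ => (hF x y).pow_pow _ _) =
      (Finset.univ.erase i).noncommProd (fun j => F j ^ r j)
        (fun x _ y _ _ => (hF x y).pow_pow _ _) := by
    refine Finset.noncommProd_congr rfl (fun j hj => ?_) _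
    have : j ≠ i := Finset.ne_of_mem_erase hj
    simp [Finsupp.add_apply, Finsupp.single_eq_of_ne' this.symm]
  rw [h1, h2, pow_add, pow_one, mul_assoc]

theorem WWfpow_add_single (F : Fin m → Module.End ℂ M)
    (hF : ∀ i j, Commute (F i) (F j)) (i : Fin m) (r : Fin m →₀ ℕ) :
    WWfpow F hF (Finsupp.single i 1 + r) = WWfpow F hF r * F i := by
  rw [WWfpow_single_add, (WWfpow_commute F hF i r).eq]

theorem WW_L0 {e t : Module.End ℂ M} (h : e * t = t * e + 1)
    (b : ℕ) (w : M) (hw : e w = 0) :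
    e ((t ^ b) w) = (b : ℂ) • ((t ^ (b - 1)) w) := by
  induction b with
  | zero => simp [hw]
  | succ b ih =>
    have : e ((t ^ (b + 1)) w) = t (e ((t ^ b) w)) + (t ^ b) w := by
      rw [pow_succ']
      have := congrArg (fun f : Module.End ℂ M => f ((t ^ b) w)) h
      simpa [Module.End.mul_apply] using this
    rw [this, ih]
    cases b with
    | zero => simp
    | succ b =>
      rw [map_smul]
      have ht : t ((t ^ (b + 1 - 1)) w) = (t ^ (b + 1)) w := by
        rw [Nat.add_sub_cancel, ← Module.End.mul_apply, ← pow_succ']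
      rw [ht]
      have : ((b + 1 + 1 : ℕ) : ℂ) = ((b + 1 : ℕ) : ℂ) + 1 := by push_cast; ring
      rw [Nat.add_sub_cancel, this, add_smul, one_smul]

theorem WW_L1 {e t : Module.End ℂ M} (h : e * t = t * e + 1)
    (k b : ℕ) (w : M) (hw : e w = 0) :
    (e ^ k) ((t ^ b) w) = ((b.descFactorial k : ℕ) : ℂ) • ((t ^ (b - k)) w) := by
  induction k with
  | zero => simp
  | succ k ih =>
    rw [pow_succ', Module.End.mul_apply, ih, map_smul,
      WW_L0 h (b - k) w hw, Nat.descFactorial_succ, smul_smul, Nat.sub_sub]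
    push_cast
    ring_nf

theorem WW_E_fpowT (T E : Fin m → Module.End ℂ M)
    (hTT : ∀ i j, Commute (T i) (T j))
    (hETne : ∀ i j, i ≠ j → Commute (E i) (T j))
    (hET1 : ∀ i, E i * T i = T i * E i + 1)
    (i : Fin m) (s : Fin m →₀ ℕ) (w : M) (hw : E i w = 0) :
    (E i) (WWfpow T hTT s w) =
      ((s i : ℕ) : ℂ) • WWfpow T hTT (s - Finsupp.single i 1) w := by
  set rest := (Finset.univ.erase i).noncommProd (fun j => T j ^ s j)
    (fun x _ y _ _ => (hTT x y).pow_pow _ _) with hrest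
  have hcomm : Commute (E i) rest := by
    refine Finset.noncommProd_commute _ _ _ _ (fun j hj => ?_)
    exact (hETne i j (Finset.ne_of_mem_erase hj).symm).pow_right _
  have hrw : E i (rest w) = 0 := by
    have := congrArg (fun f : Module.End ℂ M => f w) hcomm.eq
    simp only [Module.End.mul_apply] at this
    rw [this, hw, map_zero]
  have hpeel := congrArg (fun f : Module.End ℂ M => f w) (WWfpow_peel T hTT i s)
  simp only [Module.End.mul_apply] at hpeel
  rw [hpeel, WW_L0 (hET1 i) (s i) (rest w) hrw]
  congr 1
  have hpeel2 := congrArg (fun f : Module.End ℂ M => f w)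
    (WWfpow_peel T hTT i (s - Finsupp.single i 1))
  simp only [Module.End.mul_apply] at hpeel2
  rw [hpeel2]
  have h1 : (s - Finsupp.single i 1 : Fin m →₀ ℕ) i = s i - 1 := by
    simp [Finsupp.tsub_apply]
  have h2 : (Finset.univ.erase i).noncommProd
        (fun j => T j ^ (s - Finsupp.single i 1 : Fin m →₀ ℕ) j)
        (fun x _ y _ _ => (hTT x y).pow_pow _ _) = rest := by
    refine Finset.noncommProd_congr rfl (fun j hj => ?_) _
    have hne : j ≠ i := Finset.ne_of_mem_erase hj
    simp [Finsupp.tsub_apply, Finsupp.single_eq_of_ne' hne.symm]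
  rw [h1, h2]

theorem WW_K (T E : Fin m → Module.End ℂ M)
    (hTT : ∀ i j, Commute (T i) (T j))
    (hEE : ∀ i j, Commute (E i) (E j))
    (hETne : ∀ i j, i ≠ j → Commute (E i) (T j))
    (hET1 : ∀ i, E i * T i = T i * E i + 1)
    (t s : Fin m →₀ ℕ) (w : M) (hw : ∀ j, E j w = 0) :
    WWfpow E hEE t (WWfpow T hTT s w) =
      ((∏ j, (s j).descFactorial (t j) : ℕ) : ℂ) • WWfpow T hTT (s - t) w := by
  suffices H : ∀ (n : ℕ) (t s : Fin m →₀ ℕ), (∑ j, t j) = n →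
      WWfpow E hEE t (WWfpow T hTT s w) =
        ((∏ j, (s j).descFactorial (t j) : ℕ) : ℂ) • WWfpow T hTT (s - t) w by
    exact H _ t s rfl
  intro n
  induction n with
  | zero =>
    intro t s ht
    have ht0 : t = 0 := by
      ext j
      exact Finset.sum_eq_zero_iff.mp ht j (Finset.mem_univ j)
    subst ht0
    simp [WWfpow_zero]
  | succ n IH =>
    intro t s ht
    have hex : ∃ i, t i ≠ 0 := by
      by_contra hco
      push_neg at hco
      simp [hco] at ht
    obtain ⟨i, hi⟩ := hex
    set t' : Fin m →₀ ℕ := t - Finsupp.single i 1 with ht'def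
    have htt' : t = Finsupp.single i 1 + t' := by
      ext j
      rcases eq_or_ne j i with rfl | hne
      · simp [ht'def, Finsupp.tsub_apply]
        omega
      · simp [ht'def, Finsupp.tsub_apply, Finsupp.single_eq_of_ne' hne.symm]
    have hsum' : (∑ j, t' j) = n := by
      have : (∑ j, t j) = 1 + ∑ j, t' j := by
        rw [htt']
        simp only [Finsupp.add_apply, Finset.sum_add_distrib]
        congr 1
        simp [Finsupp.single_apply]
      omega
    have hop : WWfpow E hEE t = WWfpow E hEE t' * E i := by
      rw [htt']; exact WWfpow_add_single E hEE i t'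
    have happ : WWfpow E hEE t (WWfpow T hTT s w) =
        WWfpow E hEE t' (E i (WWfpow T hTT s w)) := by
      rw [hop, Module.End.mul_apply]
    rw [happ, WW_E_fpowT T E hTT hETne hET1 i s w (hw i), map_smul,
      IH t' (s - Finsupp.single i 1) hsum', smul_smul]
    have hsub : s - Finsupp.single i 1 - t' = s - t := by
      rw [tsub_tsub, ← htt']
    rw [hsub, ← Nat.cast_mul]
    congr 2
    -- Nat identity: s i * ∏ ((s - δᵢ) j).descFactorial (t' j) = ∏ (s j).descFactorial (t j)
    rcases Nat.eq_zero_or_pos (s i) with hsi | hsi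
    · have : (∏ j, (s j).descFactorial (t j)) = 0 := by
        refine Finset.prod_eq_zero (Finset.mem_univ i) ?_
        rw [hsi]
        have : t i = (t i - 1) + 1 := by omega
        rw [this, Nat.zero_descFactorial_succ]
      rw [this, hsi, zero_mul]
    · rw [← Finset.mul_prod_erase Finset.univ
        (fun j => ((s - Finsupp.single i 1 : Fin m →₀ ℕ) j).descFactorial (t' j))
        (Finset.mem_univ i),
        ← Finset.mul_prod_erase Finset.univ
        (fun j => (s j).descFactorial (t j)) (Finset.mem_univ i), ← mul_assoc]
      congr 1
      · have h1 : (s - Finsupp.single i 1 : Fin m →₀ ℕ) i = s i - 1 := by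
          simp [Finsupp.tsub_apply]
        have h2 : t' i = t i - 1 := by simp [ht'def, Finsupp.tsub_apply]
        rw [h1, h2]
        have hs : s i = (s i - 1) + 1 := by omega
        have hts : t i = (t i - 1) + 1 := by omega
        rw [hs, hts, Nat.succ_descFactorial_succ]
        simp
      · refine Finset.prod_congr rfl (fun j hj => ?_)
        have hne : j ≠ i := Finset.ne_of_mem_erase hj
        have h1 : (s - Finsupp.single i 1 : Fin m →₀ ℕ) j = s j := by
          simp [Finsupp.tsub_apply, Finsupp.single_eq_of_ne' hne.symm]
        have h2 : t' j = t j := by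
          simp [ht'def, Finsupp.tsub_apply, Finsupp.single_eq_of_ne' hne.symm]
        rw [h1, h2]

theorem WW_main (T E : Fin m → Module.End ℂ M)
    (hTT : ∀ i j, T i * T j = T j * T i)
    (hEE : ∀ i j, E i * E j = E j * E i)
    (hET : ∀ i j, E i * T j - T j * E i = if i = j then 1 else 0)
    (hnil : ∀ (i : Fin m) (v : M), ∃ k : ℕ, ((E i) ^ k) v = 0) :
    ∃ ψ : (MvPolynomial (Fin m) ℂ) ⊗[ℂ]
        ↥(⨅ i : Fin m, LinearMap.ker (E i)) →ₗ[ℂ] M,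
      (∀ (r : Fin m →₀ ℕ) (v : ↥(⨅ i : Fin m, LinearMap.ker (E i))),
        ψ (monomial r (1 : ℂ) ⊗ₜ[ℂ] v) =
          (List.ofFn fun i : Fin m => T i ^ (r i)).prod (v : M)) ∧
      Function.Bijective ψ := by
  classical
  have hTTc : ∀ i j, Commute (T i) (T j) := hTT
  have hEEc : ∀ i j, Commute (E i) (E j) := hEE
  have hETne : ∀ i j, i ≠ j → Commute (E i) (T j) := by
    intro i j hne
    have := hET i j
    rw [if_neg hne] at this
    exact sub_eq_zero.mp this
  have hET1 : ∀ i, E i * T i = T i * E i + 1 := by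
    intro i
    have := hET i i
    rw [if_pos rfl] at this
    rw [sub_eq_iff_eq_add.mp this, add_comm]
  set W : Submodule ℂ M := ⨅ i : Fin m, LinearMap.ker (E i) with hWdef
  have hWiff : ∀ w : M, w ∈ W ↔ ∀ j, E j w = 0 := by
    intro w
    simp [hWdef, Submodule.mem_iInf, LinearMap.mem_ker]
  set TP := WWfpow T hTTc with hTPdef
  set EP := WWfpow E hEEc with hEPdef
  -- the map `g`
  set g : ((Fin m →₀ ℕ) →₀ W) →ₗ[ℂ] M :=
    Finsupp.lsum ℂ (fun r => (TP r) ∘ₗ W.subtype) with hgdef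
  have hgsingle : ∀ (r : Fin m →₀ ℕ) (v : W), g (Finsupp.single r v) = TP r (v : M) := by
    intro r v
    rw [hgdef, Finsupp.lsum_single, LinearMap.comp_apply, Submodule.coe_subtype]
  have hgf : ∀ f : (Fin m →₀ ℕ) →₀ W, g f = ∑ s ∈ f.support, TP s (f s : M) := by
    intro f
    rw [hgdef, Finsupp.lsum_apply]
    rfl
  -- the map ρ and its inverse
  set B : MvPolynomial (Fin m) ℂ →ₗ[ℂ] (W →ₗ[ℂ] ((Fin m →₀ ℕ) →₀ W)) :=
    (basisMonomials (Fin m) ℂ).constr ℂ (fun r => Finsupp.lsingle r) with hBdef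
  have hBmono : ∀ r : Fin m →₀ ℕ, B (monomial r (1:ℂ)) = Finsupp.lsingle r := by
    intro r
    have h1 : (monomial r (1:ℂ)) = basisMonomials (Fin m) ℂ r := by
      rw [coe_basisMonomials]
    rw [h1, hBdef, Module.Basis.constr_basis]
  set ρ : (MvPolynomial (Fin m) ℂ) ⊗[ℂ] W →ₗ[ℂ] ((Fin m →₀ ℕ) →₀ W) :=
    TensorProduct.lift B with hρdef
  set σinv : ((Fin m →₀ ℕ) →₀ W) →ₗ[ℂ] (MvPolynomial (Fin m) ℂ) ⊗[ℂ] W :=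
    Finsupp.lsum ℂ (fun r => TensorProduct.mk ℂ (MvPolynomial (Fin m) ℂ) W
      (monomial r (1:ℂ))) with hσdef
  have hρσ : ∀ f, ρ (σinv f) = f := by
    intro f
    induction f using Finsupp.induction_linear with
    | zero => simp
    | add f1 f2 h1 h2 => simp [map_add, h1, h2]
    | single r v =>
      rw [hσdef, Finsupp.lsum_single, TensorProduct.mk_apply, hρdef,
        TensorProduct.lift.tmul, hBmono, Finsupp.lsingle_apply]
  have hσρ : ∀ x, σinv (ρ x) = x := by
    intro x
    induction x with
    | zero => simp
    | add x y hx hy => simp [map_add, hx, hy]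
    | tmul p w =>
      induction p using MvPolynomial.induction_on' with
      | add p q hp hq => rw [add_tmul, map_add, map_add, hp, hq]
      | monomial u c =>
        have hmon : (monomial u c : MvPolynomial (Fin m) ℂ) = c • monomial u 1 := by
          rw [MvPolynomial.smul_monomial, smul_eq_mul, mul_one]
        rw [hmon, ← smul_tmul', map_smul, map_smul, hρdef, TensorProduct.lift.tmul,
          hBmono, Finsupp.lsingle_apply, hσdef, Finsupp.lsum_single,
          TensorProduct.mk_apply]
  have hρbij : Function.Bijective ρ :=
    ⟨Function.LeftInverse.injective hσρ, Function.RightInverse.surjective hρσ⟩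
  -- injectivity of g
  have hginj : Function.Injective g := by
    rw [← LinearMap.ker_eq_bot]
    rw [Submodule.eq_bot_iff]
    intro f hf
    rw [LinearMap.mem_ker] at hf
    by_contra hne
    obtain ⟨r, hrs, hmax'⟩ := Finset.exists_maximal
      (Finsupp.support_nonempty_iff.mpr hne)
    have hmax : ∀ x ∈ f.support, ¬ r < x := fun x hx hlt => hlt.not_ge (hmax' hx hlt.le)
    have hzero : (0 : M) = ∑ s ∈ f.support, EP r (TP s (f s : M)) := by
      rw [← map_sum, ← hgf, hf, map_zero]
    have hterm : ∀ s ∈ f.support, s ≠ r → EP r (TP s (f s : M)) = 0 := by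
      intro s hs hsne
      rw [hEPdef, hTPdef, WW_K T E hTTc hEEc hETne hET1 r s (f s : M)
        (fun j => (hWiff (f s : M)).mp (f s).2 j)]
      have hc : (∏ j, (s j).descFactorial (r j)) = 0 := by
        by_contra hc0
        have hle : r ≤ s := by
          rw [Finsupp.le_def]
          intro j
          have := Finset.prod_ne_zero_iff.mp hc0 j (Finset.mem_univ j)
          rw [Ne, Nat.descFactorial_eq_zero_iff_lt] at this
          omega
        exact hmax s hs (lt_of_le_of_ne hle (Ne.symm hsne))
      rw [hc]
      simp
    rw [Finset.sum_eq_single_of_mem r hrs (fun s hs hsne => hterm s hs hsne)] at hzero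
    rw [hEPdef, hTPdef, WW_K T E hTTc hEEc hETne hET1 r r (f r : M)
      (fun j => (hWiff (f r : M)).mp (f r).2 j), tsub_self, WWfpow_zero,
      Module.End.one_apply] at hzero
    have hfac : ((∏ j, (r j).descFactorial (r j) : ℕ) : ℂ) ≠ 0 := by
      rw [Nat.cast_ne_zero]
      refine Finset.prod_ne_zero_iff.mpr (fun j _ => ?_)
      rw [Nat.descFactorial_self]
      exact Nat.factorial_ne_zero _
    have : (f r : M) = 0 := by
      have := hzero.symm
      exact (smul_eq_zero.mp this).resolve_left hfac
    exact Finsupp.mem_support_iff.mp hrs (Subtype.ext this)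
  -- surjectivity of g
  set N : Submodule ℂ M := LinearMap.range g with hNdef
  have hWN : ∀ (w : M), (∀ j, E j w = 0) → w ∈ N := by
    intro w hw
    refine ⟨Finsupp.single 0 ⟨w, (hWiff w).mpr hw⟩, ?_⟩
    rw [hgsingle, hTPdef, WWfpow_zero, Module.End.one_apply]
  have hTN : ∀ (i : Fin m) (v : M), v ∈ N → T i v ∈ N := by
    rintro i v ⟨f, rfl⟩
    rw [hgf, map_sum]
    refine Submodule.sum_mem N (fun s hs => ?_)
    have : T i (TP s (f s : M)) = TP (Finsupp.single i 1 + s) (f s : M) := by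
      rw [hTPdef, WWfpow_single_add, Module.End.mul_apply]
    rw [this]
    exact ⟨Finsupp.single (Finsupp.single i 1 + s) (f s), hgsingle _ _⟩
  have hTNpow : ∀ (i : Fin m) (k : ℕ) (v : M), v ∈ N → (T i ^ k) v ∈ N := by
    intro i k
    induction k with
    | zero => intro v hv; simpa using hv
    | succ k ih =>
      intro v hv
      rw [pow_succ', Module.End.mul_apply]
      exact hTN i _ (ih v hv)
  have key : ∀ (j : ℕ), j ≤ m → ∀ v : M, (∀ i : Fin m, j ≤ (i : ℕ) → E i v = 0) →
      v ∈ N := by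
    intro j
    induction j with
    | zero => exact fun _ v hv => hWN v (fun i => hv i (Nat.zero_le _))
    | succ j IHj =>
      intro hjm v hv
      have hjm' : j < m := hjm
      set ι : Fin m := ⟨j, hjm'⟩ with hιdef
      have sub : ∀ (k : ℕ) (v : M), ((E ι) ^ k) v = 0 →
          (∀ i : Fin m, j + 1 ≤ (i : ℕ) → E i v = 0) → v ∈ N := by
        intro k
        induction k with
        | zero =>
          intro v h0 _
          rw [pow_zero, Module.End.one_apply] at h0
          rw [h0]
          exact N.zero_mem
        | succ k IHk =>
          intro v hkv hv'
          set w : M := ((E ι) ^ k) v with hwdef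
          have hw1 : E ι w = 0 := by
            rw [hwdef, ← Module.End.mul_apply, ← pow_succ']
            exact hkv
          have hw2 : ∀ i : Fin m, j + 1 ≤ (i : ℕ) → E i w = 0 := by
            intro i hi
            have hc : E i * (E ι) ^ k = (E ι) ^ k * E i :=
              ((hEEc i ι).pow_right k).eq
            rw [hwdef, ← Module.End.mul_apply, hc, Module.End.mul_apply, hv' i hi,
              map_zero]
          have hwW : ∀ i : Fin m, j ≤ (i : ℕ) → E i w = 0 := by
            intro i hi
            rcases eq_or_lt_of_le hi with heq | hlt
            · have : i = ι := Fin.ext heq.symm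
              rw [this]; exact hw1
            · exact hw2 i hlt
          have hwN : w ∈ N := IHj (Nat.le_of_succ_le hjm) w hwW
          set c : ℂ := ((k.factorial : ℕ) : ℂ)⁻¹ with hcdef
          set u : M := c • w with hudef
          have huW : E ι u = 0 := by rw [hudef, map_smul, hw1, smul_zero]
          have hfne : ((k.factorial : ℕ) : ℂ) ≠ 0 :=
            Nat.cast_ne_zero.mpr (Nat.factorial_ne_zero k)
          have hv'1 : ((E ι) ^ k) (v - ((T ι) ^ k) u) = 0 := by
            rw [map_sub, WW_L1 (hET1 ι) k k u huW, Nat.descFactorial_self,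
              Nat.sub_self, pow_zero, Module.End.one_apply, hudef, smul_smul,
              mul_inv_cancel₀ hfne, one_smul, ← hwdef, sub_self]
          have hv'2 : ∀ i : Fin m, j + 1 ≤ (i : ℕ) → E i (v - ((T ι) ^ k) u) = 0 := by
            intro i hi
            have hne : i ≠ ι := by
              intro h
              rw [h, hιdef] at hi
              simp at hi
            have hc : E i * (T ι) ^ k = (T ι) ^ k * E i :=
              ((hETne i ι hne).pow_right k).eq
            rw [map_sub, hv' i hi, ← Module.End.mul_apply, hc, Module.End.mul_apply,
              hudef, map_smul, hw2 i hi]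
            simp
          have h1 : (v - ((T ι) ^ k) u) ∈ N := IHk _ hv'1 hv'2
          have h2 : ((T ι) ^ k) u ∈ N := hTNpow ι k u (N.smul_mem c hwN)
          have : v = (v - ((T ι) ^ k) u) + ((T ι) ^ k) u := (sub_add_cancel v _).symm
          rw [this]
          exact N.add_mem h1 h2
      obtain ⟨k, hk⟩ := hnil ι v
      exact sub k v hk hv
  have hgsurj : Function.Surjective g := by
    intro v
    have hv : v ∈ N := key m le_rfl v (fun i hi => absurd i.isLt (not_lt.mpr hi))
    exact hv
  -- assemble
  refine ⟨g ∘ₗ ρ, fun r v => ?_, ?_⟩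
  · rw [LinearMap.comp_apply, hρdef, TensorProduct.lift.tmul, hBmono,
      Finsupp.lsingle_apply, hgsingle, hTPdef, ← WWfpow_ofFn]
  · rw [LinearMap.coe_comp]
    exact Function.Bijective.comp ⟨hginj, hgsurj⟩ hρbij

end Aux

/-- For a Whittaker Weyl module `M` of type `a`, the linear map
`ψ : A ⊗ Wh_a(M) → M` determined by `ψ(t^r ⊗ v) = T^r v` is bijective. -/
theorem whittaker_weyl_module_tensor_decomposition
    (m : ℕ) (hm : 1 ≤ m) (a : Fin m → ℂ)
    (M : Type*) [AddCommGroup M] [Module ℂ M]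
    (T D : Fin m → Module.End ℂ M)
    (hTT : ∀ i j, T i * T j = T j * T i)
    (hDD : ∀ i j, D i * D j = D j * D i)
    (hDT : ∀ i j, D i * T j - T j * D i = if i = j then 1 else 0)
    (hnil : ∀ (i : Fin m) (v : M), ∃ k : ℕ, ((D i - a i • 1) ^ k) v = 0) :
    ∃ ψ : (MvPolynomial (Fin m) ℂ) ⊗[ℂ]
        ↥(⨅ i : Fin m, LinearMap.ker (D i - a i • 1)) →ₗ[ℂ] M,
      (∀ (r : Fin m →₀ ℕ) (v : ↥(⨅ i : Fin m, LinearMap.ker (D i - a i • 1))),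
        ψ (monomial r (1 : ℂ) ⊗ₜ[ℂ] v) =
          (List.ofFn fun i : Fin m => T i ^ (r i)).prod (v : M)) ∧
      Function.Bijective ψ := by
  have hEE : ∀ i j, (D i - a i • 1) * (D j - a j • 1) =
      (D j - a j • 1) * (D i - a i • 1) := by
    intro i j
    simp only [sub_mul, mul_sub, smul_mul_assoc, mul_smul_comm, one_mul, mul_one,
      hDD i j, smul_sub, smul_smul]
    rw [mul_comm (a j) (a i)]
    abel
  have hET : ∀ i j, (D i - a i • 1) * T j - T j * (D i - a i • 1) =
      if i = j then 1 else 0 := by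
    intro i j
    have h := hDT i j
    simp only [sub_mul, mul_sub, smul_mul_assoc, mul_smul_comm, one_mul, mul_one]
    rw [← h]
    abel
  exact WW_main T (fun i => D i - a i • 1) hTT hEE hET hnil
end

section
/- Let m ≥ 1 and let M be an AW-module. For a matrix B ∈ gl(m,ℂ) define Y(B) ∈ End_ℂ(M) by Y(B)(v) = D_B • v − Σ_{i=1}^m (Σ_{k=1}^m B_{k,i} t_k) • (∂_i • v), where D_B = Σ_{k,i} B_{k,i} t_k∂_i ∈ W. Then Y : gl(m,ℂ) → End_ℂ(M) is a Lie algebra homomorphism (with the commutator bracket on End_ℂ(M)), and each Y(B) commutes with the operators v ↦ ∂_j • v and v ↦ t_j • v for all j ∈ {1,…,m}. In particular, for every a ∈ ℂ^m, each Y(B) preserves the Whittaker vector space Wh_a(M) = {v ∈ M : ∂_i • v = a_i·v for all i}, so Wh_a(M) is a gl(m,ℂ)-module. -/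
open MvPolynomial

attribute [local instance 100] LieRing.ofAssociativeRing

namespace GlWhitAux

variable {m : ℕ} {M : Type*} [AddCommGroup M] [Module ℂ M]

local notation "𝔸" => MvPolynomial (Fin m) ℂ
local notation "𝔡" => Derivation ℂ (MvPolynomial (Fin m) ℂ) (MvPolynomial (Fin m) ℂ)

variable (actA : MvPolynomial (Fin m) ℂ →ₐ[ℂ] Module.End ℂ M)
variable (actW : Derivation ℂ (MvPolynomial (Fin m) ℂ) (MvPolynomial (Fin m) ℂ) →ₗ⁅ℂ⁆ Module.End ℂ M)

lemma lie_pp (i j : Fin m) : ⁅(pderiv i : 𝔡), (pderiv j : 𝔡)⁆ = 0 := by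
  apply derivation_ext; intro n
  simp only [Derivation.commutator_apply, Derivation.zero_apply, pderiv_X, Pi.single_apply]
  split_ifs <;> simp [pderiv_one]

lemma lie_Dp (k i j : Fin m) :
    ⁅((X k : 𝔸) • pderiv i : 𝔡), (pderiv j : 𝔡)⁆
      = ((if j = k then (-1:ℂ) else 0) • (pderiv i : 𝔡) : 𝔡) := by
  apply derivation_ext; intro n
  simp only [Derivation.commutator_apply, Derivation.smul_apply, pderiv_X, Pi.single_apply,
    smul_eq_mul, mul_ite, mul_one, mul_zero, pderiv_mul]
  split_ifs <;> simp_all [pderiv_one, Pi.single_apply]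

lemma dd_comm (i j : Fin m) (v : M) :
    actW (pderiv i) (actW (pderiv j) v) = actW (pderiv j) (actW (pderiv i) v) := by
  have h : actW ⁅(pderiv i : 𝔡), (pderiv j : 𝔡)⁆ = ⁅actW (pderiv i), actW (pderiv j)⁆ :=
    actW.map_lie _ _
  rw [lie_pp, map_zero actW] at h
  have h2 := congrArg (fun f => f v) h.symm
  simp only [Ring.lie_def, LinearMap.sub_apply, Module.End.mul_apply, LinearMap.zero_apply] at h2
  rw [sub_eq_zero] at h2
  exact h2

variable (compat : ∀ (D : Derivation ℂ (MvPolynomial (Fin m) ℂ) (MvPolynomial (Fin m) ℂ))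
      (p : MvPolynomial (Fin m) ℂ) (v : M),
      actW D (actA p v) = actA (D p) v + actA p (actW D v))

include compat in
lemma comm1 (k j : Fin m) (v : M) :
    actW (pderiv j) (actA (X k) v)
      = (if j = k then (1:ℂ) else 0) • v + actA (X k) (actW (pderiv j) v) := by
  have h := compat (pderiv j) (X k) v
  rcases eq_or_ne j k with hk | hk
  · subst hk; simpa using h
  · rw [pderiv_X_of_ne hk.symm] at h
    simpa [hk] using h

include compat in
lemma comm2 (k i l : Fin m) (v : M) :
    actW ((X k : 𝔸) • pderiv i) (actA (X l) v)
      = (if i = l then (1:ℂ) else 0) • actA (X k) v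
        + actA (X l) (actW ((X k : 𝔸) • pderiv i) v) := by
  have h := compat ((X k : 𝔸) • pderiv i) (X l) v
  rcases eq_or_ne i l with hl | hl
  · subst hl
    simp only [Derivation.smul_apply, pderiv_X_self, smul_eq_mul, mul_one] at h
    simpa using h
  · simp only [Derivation.smul_apply, pderiv_X_of_ne hl.symm, smul_eq_mul, mul_zero,
      map_zero, LinearMap.zero_apply, zero_add] at h
    simpa [hl] using h

lemma dP_comm (k i j : Fin m) (v : M) :
    actW (pderiv j) (actW ((X k : 𝔸) • pderiv i) v)
      = actW ((X k : 𝔸) • pderiv i) (actW (pderiv j) v)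
        + (if j = k then (1:ℂ) else 0) • actW (pderiv i) v := by
  have h : actW ⁅((X k : 𝔸) • pderiv i : 𝔡), (pderiv j : 𝔡)⁆
      = ⁅actW ((X k : 𝔸) • pderiv i), actW (pderiv j)⁆ := actW.map_lie _ _
  rw [lie_Dp, map_smul actW] at h
  have h2 := congrArg (fun f => f v) h
  simp only [Ring.lie_def, LinearMap.sub_apply, Module.End.mul_apply, LinearMap.smul_apply] at h2
  have h3 : actW (pderiv j) (actW ((X k : 𝔸) • pderiv i) v)
      = actW ((X k : 𝔸) • pderiv i) (actW (pderiv j) v)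
        - (if j = k then (-1:ℂ) else 0) • actW (pderiv i) v := by
    rw [eq_sub_iff_add_eq, h2]; abel
  rw [h3]; split_ifs <;> simp

lemma lie_DD (k i l j : Fin m) :
    ⁅((X k : 𝔸) • pderiv i : 𝔡), ((X l : 𝔸) • pderiv j : 𝔡)⁆ =
      (((if i = l then (1:ℂ) else 0) • ((X k : 𝔸) • pderiv j : 𝔡)
        - (if j = k then (1:ℂ) else 0) • ((X l : 𝔸) • pderiv i : 𝔡)) : 𝔡) := by
  apply derivation_ext; intro n
  simp only [Derivation.commutator_apply, Derivation.smul_apply, Derivation.sub_apply, pderiv_X,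
    Pi.single_apply, smul_eq_mul, mul_ite, mul_one, mul_zero]
  split_ifs <;> simp_all [pderiv_one, Pi.single_apply, pderiv_mul]

lemma PP_comm (k i l j : Fin m) (v : M) :
    actW ((X k : 𝔸) • pderiv i) (actW ((X l : 𝔸) • pderiv j) v)
      - actW ((X l : 𝔸) • pderiv j) (actW ((X k : 𝔸) • pderiv i) v)
      = (if i = l then (1:ℂ) else 0) • actW ((X k : 𝔸) • pderiv j) v
        - (if j = k then (1:ℂ) else 0) • actW ((X l : 𝔸) • pderiv i) v := by
  have h : actW ⁅((X k : 𝔸) • pderiv i : 𝔡), ((X l : 𝔸) • pderiv j : 𝔡)⁆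
      = ⁅actW ((X k : 𝔸) • pderiv i), actW ((X l : 𝔸) • pderiv j)⁆ := actW.map_lie _ _
  rw [lie_DD, map_sub actW, map_smul actW, map_smul actW] at h
  have h2 := congrArg (fun f => f v) h
  simpa only [Ring.lie_def, LinearMap.sub_apply, Module.End.mul_apply, LinearMap.smul_apply]
    using h2.symm

noncomputable def Z (k i : Fin m) : Module.End ℂ M :=
  actW ((X k : 𝔸) • pderiv i) - actA (X k) * actW (pderiv i)

lemma Z_apply (k i : Fin m) (v : M) :
    Z actA actW k i v = actW ((X k : 𝔸) • pderiv i) v - actA (X k) (actW (pderiv i) v) := rfl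

lemma AA_comm (p q : MvPolynomial (Fin m) ℂ) (v : M) :
    actA p (actA q v) = actA q (actA p v) := by
  rw [← Module.End.mul_apply, ← map_mul, mul_comm, map_mul, Module.End.mul_apply]

include compat in
lemma Zd (k i j : Fin m) (v : M) :
    Z actA actW k i (actW (pderiv j) v) = actW (pderiv j) (Z actA actW k i v) := by
  simp only [Z_apply, map_sub, comm1 actA actW compat, dP_comm actW]
  rw [dd_comm actW j i v]
  abel

include compat in
lemma ZX (k i j : Fin m) (v : M) :
    Z actA actW k i (actA (X j) v) = actA (X j) (Z actA actW k i v) := by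
  simp only [Z_apply, map_sub, comm1 actA actW compat, comm2 actA actW compat, map_add, map_smul]
  rw [AA_comm actA (X k) (X j)]
  abel

set_option maxHeartbeats 1000000 in
include compat in
lemma Zbr (k i l j : Fin m) (v : M) :
    Z actA actW k i (Z actA actW l j v) - Z actA actW l j (Z actA actW k i v)
      = (if i = l then (1:ℂ) else 0) • Z actA actW k j v
        - (if j = k then (1:ℂ) else 0) • Z actA actW l i v := by
  have step1 : Z actA actW k i (Z actA actW l j v) - Z actA actW l j (Z actA actW k i v)
      = Z actA actW k i (actW ((X l : 𝔸) • pderiv j) v)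
        - actW ((X l : 𝔸) • pderiv j) (Z actA actW k i v) := by
    have e1 : Z actA actW k i (Z actA actW l j v)
        = Z actA actW k i (actW ((X l : 𝔸) • pderiv j) v)
          - actA (X l) (actW (pderiv j) (Z actA actW k i v)) := by
      rw [Z_apply actA actW l j v, map_sub, ZX actA actW compat, Zd actA actW compat]
    rw [e1, Z_apply actA actW l j (Z actA actW k i v)]
    abel
  rw [step1]
  have e2 : Z actA actW k i (actW ((X l : 𝔸) • pderiv j) v)
      = actW ((X k : 𝔸) • pderiv i) (actW ((X l : 𝔸) • pderiv j) v)
        - actA (X k) (actW ((X l : 𝔸) • pderiv j) (actW (pderiv i) v))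
        - (if i = l then (1:ℂ) else 0) • actA (X k) (actW (pderiv j) v) := by
    rw [Z_apply actA actW k i (actW ((X l : 𝔸) • pderiv j) v), dP_comm actW l j i v, map_add, map_smul (actA (X k))]
    abel
  have e3 : actW ((X l : 𝔸) • pderiv j) (Z actA actW k i v)
      = actW ((X l : 𝔸) • pderiv j) (actW ((X k : 𝔸) • pderiv i) v)
        - (if j = k then (1:ℂ) else 0) • actA (X l) (actW (pderiv i) v)
        - actA (X k) (actW ((X l : 𝔸) • pderiv j) (actW (pderiv i) v)) := by
    rw [Z_apply actA actW k i v, map_sub, comm2 actA actW compat l j k (actW (pderiv i) v)]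
    abel
  rw [e2, e3]
  have e4 := PP_comm actW k i l j v
  simp only [Z_apply, smul_sub]
  rw [eq_sub_iff_add_eq] at e4 ⊢
  rw [← e4]
  abel

lemma sum3_comm {N : Type*} [AddCommMonoid N] (f : Fin m → Fin m → Fin m → N) :
    ∑ k, ∑ i, ∑ l, f k i l = ∑ l, ∑ i, ∑ k, f k i l := by
  calc ∑ k, ∑ i, ∑ l, f k i l
      = ∑ k, ∑ l, ∑ i, f k i l := Finset.sum_congr rfl fun k _ => Finset.sum_comm
    _ = ∑ l, ∑ k, ∑ i, f k i l := Finset.sum_comm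
    _ = ∑ l, ∑ i, ∑ k, f k i l := Finset.sum_congr rfl fun l _ => Finset.sum_comm

lemma sum4_comm {N : Type*} [AddCommMonoid N] (f : Fin m → Fin m → Fin m → Fin m → N) :
    ∑ l, ∑ j, ∑ k, ∑ i, f k i l j = ∑ k, ∑ i, ∑ l, ∑ j, f k i l j := by
  have e : ∀ (g : Fin m → Fin m → N),
      ∑ a, ∑ b, g a b = ∑ p : Fin m × Fin m, g p.1 p.2 := fun g =>
    (Fintype.sum_prod_type (f := fun p => g p.1 p.2)).symm
  calc ∑ l, ∑ j, ∑ k, ∑ i, f k i l j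
      = ∑ p : Fin m × Fin m, ∑ k, ∑ i, f k i p.1 p.2 := e fun l j => ∑ k, ∑ i, f k i l j
    _ = ∑ p : Fin m × Fin m, ∑ q : Fin m × Fin m, f q.1 q.2 p.1 p.2 :=
        Finset.sum_congr rfl fun p _ => e _
    _ = ∑ q : Fin m × Fin m, ∑ p : Fin m × Fin m, f q.1 q.2 p.1 p.2 := Finset.sum_comm
    _ = ∑ q : Fin m × Fin m, ∑ l, ∑ j, f q.1 q.2 l j :=
        Finset.sum_congr rfl fun q _ => (e _).symm
    _ = ∑ k, ∑ i, ∑ l, ∑ j, f k i l j := (e fun k i => ∑ l, ∑ j, f k i l j).symm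


lemma actW_sum2 (g : Fin m → Fin m → Derivation ℂ (MvPolynomial (Fin m) ℂ) (MvPolynomial (Fin m) ℂ)) :
    actW (∑ k, ∑ i, g k i) = ∑ k, ∑ i, actW (g k i) := by
  show actW.toLinearMap _ = _
  simp only [map_sum, LieHom.coe_toLinearMap]

lemma hYZ_aux (Y : Matrix (Fin m) (Fin m) ℂ → Module.End ℂ M)
    (hY : ∀ (B : Matrix (Fin m) (Fin m) ℂ) (v : M),
      Y B v = actW (∑ k : Fin m, ∑ i : Fin m,
          B k i • ((X k : MvPolynomial (Fin m) ℂ) • pderiv i)) v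
        - ∑ i : Fin m, actA (∑ k : Fin m, B k i • X k) (actW (pderiv i) v))
    (B : Matrix (Fin m) (Fin m) ℂ) (v : M) :
    Y B v = ∑ k, ∑ i, B k i • Z actA actW k i v := by
  rw [hY, actW_sum2]
  simp only [actW.map_smul, map_sum, map_smul, LinearMap.sum_apply, LinearMap.smul_apply,
    Z_apply, smul_sub, Finset.sum_sub_distrib]
  congr 1
  exact Finset.sum_comm


end GlWhitAux

open GlWhitAux in
/-- For an AW-module `M`, the operators
`Y(B) = D_B − Σ_i (Σ_k B_{k,i} t_k)·∂_i` (for `B ∈ gl(m,ℂ)`) define a Lie algebra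
homomorphism `gl(m,ℂ) → End(M)` commuting with the actions of all `∂_j` and `t_j`;
in particular each `Y(B)` preserves every Whittaker vector space `Wh_a(M)`, which is
thereby a `gl(m,ℂ)`-module. -/
theorem gl_action_on_whittaker_vectors
    (m : ℕ) (hm : 1 ≤ m)
    (M : Type*) [AddCommGroup M] [Module ℂ M]
    (actA : MvPolynomial (Fin m) ℂ →ₐ[ℂ] Module.End ℂ M)
    (actW : Derivation ℂ (MvPolynomial (Fin m) ℂ) (MvPolynomial (Fin m) ℂ) →ₗ⁅ℂ⁆
      Module.End ℂ M)
    (compat : ∀ (D : Derivation ℂ (MvPolynomial (Fin m) ℂ) (MvPolynomial (Fin m) ℂ))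
      (p : MvPolynomial (Fin m) ℂ) (v : M),
      actW D (actA p v) = actA (D p) v + actA p (actW D v))
    (Y : Matrix (Fin m) (Fin m) ℂ → Module.End ℂ M)
    (hY : ∀ (B : Matrix (Fin m) (Fin m) ℂ) (v : M),
      Y B v = actW (∑ k : Fin m, ∑ i : Fin m,
          B k i • ((X k : MvPolynomial (Fin m) ℂ) • pderiv i)) v
        - ∑ i : Fin m, actA (∑ k : Fin m, B k i • X k) (actW (pderiv i) v)) :
    IsLinearMap ℂ Y ∧
    (∀ B C : Matrix (Fin m) (Fin m) ℂ,
      Y (B * C - C * B) = Y B * Y C - Y C * Y B) ∧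
    (∀ (B : Matrix (Fin m) (Fin m) ℂ) (j : Fin m) (v : M),
      Y B (actW (pderiv j) v) = actW (pderiv j) (Y B v)) ∧
    (∀ (B : Matrix (Fin m) (Fin m) ℂ) (j : Fin m) (v : M),
      Y B (actA (X j) v) = actA (X j) (Y B v)) ∧
    (∀ (a : Fin m → ℂ) (B : Matrix (Fin m) (Fin m) ℂ) (v : M),
      (∀ i, actW (pderiv i) v = a i • v) →
      ∀ i, actW (pderiv i) (Y B v) = a i • Y B v) := by
  have hZ := hYZ_aux actA actW Y hY
  have cd : ∀ (B : Matrix (Fin m) (Fin m) ℂ) (j : Fin m) (v : M),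
      Y B (actW (pderiv j) v) = actW (pderiv j) (Y B v) := by
    intro B j v
    simp only [hZ, map_sum, map_smul, Zd actA actW compat]
  have cx : ∀ (B : Matrix (Fin m) (Fin m) ℂ) (j : Fin m) (v : M),
      Y B (actA (X j) v) = actA (X j) (Y B v) := by
    intro B j v
    simp only [hZ, map_sum, map_smul, ZX actA actW compat]
  refine ⟨⟨?_, ?_⟩, ?_, cd, cx, ?_⟩
  · intro B C; ext v
    simp only [LinearMap.add_apply, hZ, Matrix.add_apply, add_smul, Finset.sum_add_distrib]
  · intro c B; ext v
    simp only [LinearMap.smul_apply, hZ, Matrix.smul_apply, smul_eq_mul, mul_smul,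
      ← Finset.smul_sum]
  · -- the bracket identity
    intro B C; ext v
    simp only [LinearMap.sub_apply, Module.End.mul_apply]
    have h1 : Y B (Y C v)
        = ∑ k, ∑ i, ∑ l, ∑ j, (B k i * C l j) • Z actA actW k i (Z actA actW l j v) := by
      rw [hZ C v, hZ B]
      simp only [map_sum, map_smul, Finset.smul_sum, smul_smul]
    have h2 : Y C (Y B v)
        = ∑ k, ∑ i, ∑ l, ∑ j, (B k i * C l j) • Z actA actW l j (Z actA actW k i v) := by
      rw [hZ B v, hZ C]
      simp only [map_sum, map_smul, Finset.smul_sum, smul_smul]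
      rw [← sum4_comm (f := fun k i l j => (B k i * C l j) • Z actA actW l j (Z actA actW k i v))]
      refine Finset.sum_congr rfl fun l _ => Finset.sum_congr rfl fun j _ =>
        Finset.sum_congr rfl fun k _ => Finset.sum_congr rfl fun i _ => by rw [mul_comm]
    rw [h1, h2, ← Finset.sum_sub_distrib]
    simp only [← Finset.sum_sub_distrib, ← smul_sub]
    have key : ∀ k i : Fin m,
        ∑ l, ∑ j, (B k i * C l j) •
            (Z actA actW k i (Z actA actW l j v) - Z actA actW l j (Z actA actW k i v))
          = ∑ j, (B k i * C i j) • Z actA actW k j v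
            - ∑ l, (B k i * C l k) • Z actA actW l i v := by
      intro k i
      simp only [Zbr actA actW compat, smul_sub, smul_smul, mul_ite, mul_one, mul_zero,
        ite_smul, zero_smul, Finset.sum_sub_distrib]
      congr 1
      · rw [Finset.sum_comm]
        simp [Finset.sum_ite_eq]
      · simp [Finset.sum_ite_eq']
    simp only [key]
    simp only [Finset.sum_sub_distrib]
    have t1 : ∑ k, ∑ j : Fin m, (∑ i, (B k i * C i j)) • Z actA actW k j v
        = ∑ k, ∑ i : Fin m, ∑ j, (B k i * C i j) • Z actA actW k j v := by
      refine Finset.sum_congr rfl fun k _ => ?_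
      rw [Finset.sum_comm]
      exact Finset.sum_congr rfl fun j _ => Finset.sum_smul
    have t2 : ∑ k, ∑ i : Fin m, ∑ l, (B k i * C l k) • Z actA actW l i v
        = ∑ l, ∑ i : Fin m, (∑ k, (C l k * B k i)) • Z actA actW l i v := by
      rw [sum3_comm (f := fun k i l => (B k i * C l k) • Z actA actW l i v)]
      refine Finset.sum_congr rfl fun l _ => Finset.sum_congr rfl fun i _ => ?_
      rw [Finset.sum_smul]
      exact Finset.sum_congr rfl fun k _ => by rw [mul_comm]
    rw [← t1, t2, hZ]
    simp only [Matrix.sub_apply, Matrix.mul_apply, sub_smul, Finset.sum_sub_distrib,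
      Finset.sum_smul]
  · intro a B v hv i
    rw [← cd B i v, hv i, map_smul]
end

section
/- Let m ≥ 1 and let 𝔪 ⊂ A be the maximal ideal of polynomials vanishing at the origin. Let L = {D ∈ W : D(t_i) ∈ 𝔪 for all i} and I = {D ∈ W : D(t_i) ∈ 𝔪² for all i}. Then L is a Lie subalgebra of W, I is a Lie ideal of L, and the quotient Lie algebra L/I is isomorphic to the matrix Lie algebra gl(m,ℂ), via the map induced by t_k∂_i ↦ E_{k,i}. -/
open MvPolynomial


variable {m : ℕ}

local notation "A" => MvPolynomial (Fin m) ℂ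
local notation "𝔪" => RingHom.ker (eval (0 : Fin m → ℂ))

lemma mem_m_iff (p : MvPolynomial (Fin m) ℂ) : p ∈ 𝔪 ↔ eval (0 : Fin m → ℂ) p = 0 :=
  RingHom.mem_ker

lemma eps_mul (k : Fin m) (p q : MvPolynomial (Fin m) ℂ) :
    eval (0 : Fin m → ℂ) (pderiv k (p * q)) =
      eval 0 p * eval (0 : Fin m → ℂ) (pderiv k q) +
      eval (0 : Fin m → ℂ) (pderiv k p) * eval 0 q := by
  rw [(pderiv k).leibniz]
  simp [smul_eq_mul, mul_comm]

lemma sum_formula (D : Derivation ℂ (MvPolynomial (Fin m) ℂ) (MvPolynomial (Fin m) ℂ))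
    (p : MvPolynomial (Fin m) ℂ) :
    D p = ∑ j : Fin m, pderiv j p * D (X j) := by
  induction p using MvPolynomial.induction_on with
  | C a =>
    have h : (C a : MvPolynomial (Fin m) ℂ) = algebraMap ℂ _ a := rfl
    simp [h, Derivation.map_algebraMap]
  | add p q hp hq => simp [hp, hq, add_mul, Finset.sum_add_distrib]
  | mul_X p i hp =>
    rw [D.leibniz]
    simp only [smul_eq_mul, hp, Finset.mul_sum]
    have h1 : ∀ j : Fin m, pderiv j (p * X i) * D (X j)
        = p * pderiv j (X i) * D (X j) + X i * (pderiv j p * D (X j)) := by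
      intro j; rw [(pderiv j).leibniz]; simp only [smul_eq_mul]; ring
    simp only [h1, Finset.sum_add_distrib]
    congr 1
    rw [Finset.sum_eq_single i]
    · simp
    · intro b _ hb; simp [pderiv_X, Pi.single_eq_of_ne (Ne.symm hb)]
    · simp

lemma eval0_X (k : Fin m) : eval (0 : Fin m → ℂ) (X k) = 0 := by simp

lemma D_eval0 (D : Derivation ℂ (MvPolynomial (Fin m) ℂ) (MvPolynomial (Fin m) ℂ))
    (hD : ∀ i, eval (0 : Fin m → ℂ) (D (X i)) = 0) (p : MvPolynomial (Fin m) ℂ) :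
    eval (0 : Fin m → ℂ) (D p) = 0 := by
  rw [sum_formula D p, map_sum]
  refine Finset.sum_eq_zero fun j _ => ?_
  rw [map_mul, hD j, mul_zero]

lemma decomp (p : MvPolynomial (Fin m) ℂ) :
    p - C (eval (0 : Fin m → ℂ) p)
      - ∑ k : Fin m, C (eval (0 : Fin m → ℂ) (pderiv k p)) * X k ∈ 𝔪 ^ 2 := by
  induction p using MvPolynomial.induction_on with
  | C a => simp
  | add p q hp hq =>
    have : p + q - C (eval (0 : Fin m → ℂ) (p + q))
        - ∑ k : Fin m, C (eval (0 : Fin m → ℂ) (pderiv k (p + q))) * X k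
      = (p - C (eval (0 : Fin m → ℂ) p)
          - ∑ k : Fin m, C (eval (0 : Fin m → ℂ) (pderiv k p)) * X k)
        + (q - C (eval (0 : Fin m → ℂ) q)
          - ∑ k : Fin m, C (eval (0 : Fin m → ℂ) (pderiv k q)) * X k) := by
      simp only [map_add, add_mul, Finset.sum_add_distrib]
      ring
    rw [this]
    exact add_mem hp hq
  | mul_X p i _ =>
    have hsum : ∑ k : Fin m, C (eval (0 : Fin m → ℂ) (pderiv k (p * X i))) * X k
        = C (eval (0 : Fin m → ℂ) p) * X i := by
      have h1 : ∀ k : Fin m, eval (0 : Fin m → ℂ) (pderiv k (p * X i))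
          = eval (0 : Fin m → ℂ) p * eval (0 : Fin m → ℂ) (pderiv k (X i)) := by
        intro k; rw [eps_mul]; simp
      simp only [h1]
      rw [Finset.sum_eq_single i]
      · simp
      · intro b _ hb; simp [pderiv_X, Pi.single_eq_of_ne (Ne.symm hb)]
      · simp
    have heq : p * X i - C (eval (0 : Fin m → ℂ) (p * X i))
        - ∑ k : Fin m, C (eval (0 : Fin m → ℂ) (pderiv k (p * X i))) * X k
      = (p - C (eval (0 : Fin m → ℂ) p)) * X i := by
      rw [hsum]; simp only [map_mul, eval0_X, mul_zero, map_zero]; ring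
    rw [heq, pow_two]
    refine Ideal.mul_mem_mul ?_ ?_
    · rw [mem_m_iff]; simp
    · rw [mem_m_iff]; simp

lemma msq_iff (p : MvPolynomial (Fin m) ℂ) :
    p ∈ 𝔪 ^ 2 ↔ eval (0 : Fin m → ℂ) p = 0 ∧
      ∀ k, eval (0 : Fin m → ℂ) (pderiv k p) = 0 := by
  constructor
  · intro hp
    rw [pow_two] at hp
    refine Submodule.mul_induction_on hp ?_ ?_
    · intro a ha b hb
      rw [mem_m_iff] at ha hb
      constructor
      · rw [map_mul, ha, zero_mul]
      · intro k; rw [eps_mul, ha, hb]; ring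
    · intro x y hx hy
      exact ⟨by rw [map_add, hx.1, hy.1, add_zero],
        fun k => by rw [map_add, map_add, hx.2 k, hy.2 k, add_zero]⟩
  · rintro ⟨h0, h1⟩
    have := decomp p
    rw [h0] at this
    simp only [h1, map_zero, zero_mul, Finset.sum_const_zero] at this
    simpa using this

lemma D_maps_msq (D : Derivation ℂ (MvPolynomial (Fin m) ℂ) (MvPolynomial (Fin m) ℂ))
    (hD : ∀ i, eval (0 : Fin m → ℂ) (D (X i)) = 0) {q : MvPolynomial (Fin m) ℂ}
    (hq : q ∈ 𝔪 ^ 2) : D q ∈ 𝔪 ^ 2 := by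
  rw [pow_two] at hq ⊢
  refine Submodule.mul_induction_on hq ?_ ?_
  · intro a ha b hb
    rw [D.leibniz, smul_eq_mul, smul_eq_mul]
    refine add_mem (Ideal.mul_mem_mul ha ?_) (Ideal.mul_mem_mul hb ?_)
    · rw [mem_m_iff]; exact D_eval0 D hD b
    · rw [mem_m_iff]; exact D_eval0 D hD a
  · intro x y hx hy
    rw [map_add]; exact add_mem hx hy

lemma E_maps_all_msq (E : Derivation ℂ (MvPolynomial (Fin m) ℂ) (MvPolynomial (Fin m) ℂ))
    (hE : ∀ i, E (X i) ∈ 𝔪 ^ 2) (q : MvPolynomial (Fin m) ℂ) : E q ∈ 𝔪 ^ 2 := by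
  rw [sum_formula E q]
  exact Submodule.sum_mem _ fun j _ => Ideal.mul_mem_left _ _ (hE j)

lemma eps_D (D : Derivation ℂ (MvPolynomial (Fin m) ℂ) (MvPolynomial (Fin m) ℂ))
    (hD : ∀ i, eval (0 : Fin m → ℂ) (D (X i)) = 0) (k : Fin m) (q : MvPolynomial (Fin m) ℂ) :
    eval (0 : Fin m → ℂ) (pderiv k (D q)) =
      ∑ j : Fin m, eval (0 : Fin m → ℂ) (pderiv j q) *
        eval (0 : Fin m → ℂ) (pderiv k (D (X j))) := by
  rw [sum_formula D q, map_sum, map_sum]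
  refine Finset.sum_congr rfl fun j _ => ?_
  rw [eps_mul, hD j, mul_zero, add_zero]

lemma der_sum_apply {ι : Type*} [DecidableEq ι] (s : Finset ι)
    (g : ι → Derivation ℂ (MvPolynomial (Fin m) ℂ) (MvPolynomial (Fin m) ℂ))
    (p : MvPolynomial (Fin m) ℂ) : (∑ x ∈ s, g x) p = ∑ x ∈ s, g x p := by
  induction s using Finset.induction_on with
  | empty => simp
  | insert a s hx ih => rw [Finset.sum_insert hx, Finset.sum_insert hx,
      Derivation.add_apply, ih]

/-- With `𝔪` the maximal ideal of polynomials vanishing at the origin,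
`L = {D ∈ W : D(t_i) ∈ 𝔪}` is a Lie subalgebra of `W`, `I = {D ∈ W : D(t_i) ∈ 𝔪²}`
is a Lie ideal of `L`, and `L/I ≅ gl(m,ℂ)` via the map induced by `t_k∂_i ↦ E_{k,i}`.
The isomorphism is expressed by a linear map `f` on derivations sending `t_k∂_i` to
`E_{k,i}`, which on `L` is a Lie algebra map onto `gl(m,ℂ)` with kernel exactly `I`. -/
theorem quotient_of_linear_vector_fields_iso_gl
    (m : ℕ) (hm : 1 ≤ m) :
    (∀ D E : Derivation ℂ (MvPolynomial (Fin m) ℂ) (MvPolynomial (Fin m) ℂ),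
      (∀ i, D (X i) ∈ RingHom.ker (eval (0 : Fin m → ℂ))) →
      (∀ i, E (X i) ∈ RingHom.ker (eval (0 : Fin m → ℂ))) →
      ∀ i, ⁅D, E⁆ (X i) ∈ RingHom.ker (eval (0 : Fin m → ℂ))) ∧
    (∀ D E : Derivation ℂ (MvPolynomial (Fin m) ℂ) (MvPolynomial (Fin m) ℂ),
      (∀ i, D (X i) ∈ RingHom.ker (eval (0 : Fin m → ℂ))) →
      (∀ i, E (X i) ∈ (RingHom.ker (eval (0 : Fin m → ℂ))) ^ 2) →
      ∀ i, ⁅D, E⁆ (X i) ∈ (RingHom.ker (eval (0 : Fin m → ℂ))) ^ 2) ∧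
    ∃ f : Derivation ℂ (MvPolynomial (Fin m) ℂ) (MvPolynomial (Fin m) ℂ) →ₗ[ℂ]
        Matrix (Fin m) (Fin m) ℂ,
      (∀ k i : Fin m,
        f ((X k : MvPolynomial (Fin m) ℂ) • pderiv i) = Matrix.single k i 1) ∧
      (∀ D E : Derivation ℂ (MvPolynomial (Fin m) ℂ) (MvPolynomial (Fin m) ℂ),
        (∀ i, D (X i) ∈ RingHom.ker (eval (0 : Fin m → ℂ))) →
        (∀ i, E (X i) ∈ RingHom.ker (eval (0 : Fin m → ℂ))) →
        f ⁅D, E⁆ = f D * f E - f E * f D) ∧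
      (∀ B : Matrix (Fin m) (Fin m) ℂ,
        ∃ D : Derivation ℂ (MvPolynomial (Fin m) ℂ) (MvPolynomial (Fin m) ℂ),
          (∀ i, D (X i) ∈ RingHom.ker (eval (0 : Fin m → ℂ))) ∧ f D = B) ∧
      (∀ D : Derivation ℂ (MvPolynomial (Fin m) ℂ) (MvPolynomial (Fin m) ℂ),
        (∀ i, D (X i) ∈ RingHom.ker (eval (0 : Fin m → ℂ))) →
        (f D = 0 ↔ ∀ i, D (X i) ∈ (RingHom.ker (eval (0 : Fin m → ℂ))) ^ 2)) := by
  refine ⟨?_, ?_, ?_⟩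
  · -- L is a Lie subalgebra
    intro D E hD hE i
    simp only [mem_m_iff] at hD hE ⊢
    rw [Derivation.commutator_apply, map_sub, D_eval0 D hD, D_eval0 E hE, sub_zero]
  · -- I is an ideal of L
    intro D E hD hE i
    simp only [mem_m_iff] at hD
    rw [Derivation.commutator_apply]
    exact sub_mem (D_maps_msq D hD (hE i)) (E_maps_all_msq E hE _)
  · -- the linear map f
    refine ⟨{ toFun := fun D => Matrix.of fun k i => eval (0 : Fin m → ℂ) (pderiv k (D (X i)))
              map_add' := fun D E => by
                ext k i
                simp [Derivation.add_apply]
              map_smul' := fun c D => by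
                ext k i
                simp [Derivation.smul_apply] }, ?_, ?_, ?_, ?_⟩
    · -- f (X k • pderiv i) = E_{k,i}
      intro k i
      ext k' i'
      simp only [LinearMap.coe_mk, AddHom.coe_mk, Matrix.of_apply, Derivation.smul_apply]
      by_cases hi : i = i'
      · subst hi
        by_cases hk : k = k'
        · subst hk; simp [smul_eq_mul, Matrix.single_apply_same]
        · simp [smul_eq_mul, Matrix.single, hk, pderiv_X,
            Pi.single_eq_of_ne (Ne.symm hk)]
      · simp [smul_eq_mul, Matrix.single, hi, pderiv_X_of_ne (Ne.symm hi)]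
    · -- Lie algebra map
      intro D E hD hE
      simp only [mem_m_iff] at hD hE
      ext k i
      simp only [LinearMap.coe_mk, AddHom.coe_mk, Matrix.of_apply, Matrix.sub_apply,
        Matrix.mul_apply, Derivation.commutator_apply, map_sub]
      rw [eps_D D hD k (E (X i)), eps_D E hE k (D (X i))]
      simp only [← Finset.sum_sub_distrib]
      refine Finset.sum_congr rfl fun j _ => ?_
      ring
    · -- surjectivity
      intro B
      refine ⟨∑ k : Fin m, ∑ i : Fin m,
        ((C (B k i) * X k : MvPolynomial (Fin m) ℂ) • pderiv i), ?_, ?_⟩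
      all_goals
        have hDX : ∀ j : Fin m, (∑ k : Fin m, ∑ i : Fin m,
            ((C (B k i) * X k : MvPolynomial (Fin m) ℂ) • pderiv i)) (X j)
            = ∑ k : Fin m, C (B k j) * X k := by
          intro j
          rw [der_sum_apply]
          refine Finset.sum_congr rfl fun k _ => ?_
          rw [der_sum_apply]
          rw [Finset.sum_eq_single j]
          · simp [Derivation.smul_apply, smul_eq_mul]
          · intro b _ hb; simp [Derivation.smul_apply, smul_eq_mul, pderiv_X_of_ne (Ne.symm hb), Pi.single_eq_of_ne hb]
          · simp
      · intro i
        rw [mem_m_iff, hDX i, map_sum]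
        exact Finset.sum_eq_zero fun k _ => by simp
      · ext k' j
        simp only [LinearMap.coe_mk, AddHom.coe_mk, Matrix.of_apply]
        rw [hDX j, map_sum, map_sum]
        rw [Finset.sum_eq_single k']
        · simp [pderiv_C_mul]
        · intro b _ hb; simp [pderiv_C_mul, pderiv_X_of_ne (Ne.symm hb), Pi.single_eq_of_ne hb]
        · simp
    · -- kernel is I
      intro D hD
      simp only [mem_m_iff] at hD
      constructor
      · intro h i
        rw [msq_iff]
        refine ⟨hD i, fun k => ?_⟩
        have := congrFun (congrFun h k) i
        simpa using this
      · intro h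
        ext k i
        have := (msq_iff (D (X i))).mp (h i)
        simpa using this.2 k
end

section
/- Let m ≥ 1, let 𝔪 ⊂ A be the maximal ideal of polynomials vanishing at the origin, and let L = {D ∈ W : D(t_i) ∈ 𝔪 for all i} and I = {D ∈ W : D(t_i) ∈ 𝔪² for all i}, so that L is a Lie subalgebra of W and I a Lie ideal of L. If V is a finite-dimensional simple Lie module over L (V ≠ 0 with no L-submodules other than 0 and V), then I annihilates V: D • v = 0 for all D ∈ I and v ∈ V. Consequently V is a simple module over L/I ≅ gl(m,ℂ). -/
open MvPolynomial

noncomputable section AuxSect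

variable {m : ℕ}

/-- Abbreviation for the polynomial algebra. -/
abbrev AuxA (m : ℕ) := MvPolynomial (Fin m) ℂ

/-- Abbreviation for derivations. -/
abbrev AuxDer (m : ℕ) := Derivation ℂ (AuxA m) (AuxA m)

/-- The maximal ideal at the origin. -/
def AuxM (m : ℕ) : Ideal (AuxA m) := RingHom.ker (eval (0 : Fin m → ℂ))

theorem auxMem_iff (q : AuxA m) : q ∈ AuxM m ↔ constantCoeff q = 0 := by
  rw [AuxM, RingHom.mem_ker, eval_zero]

theorem auxX_mem (k : Fin m) : (X k : AuxA m) ∈ AuxM m := by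
  rw [auxMem_iff, constantCoeff_X]

theorem aux_sum_apply (s : Finset (Fin m)) (G : Fin m → AuxDer m) (q : AuxA m) :
    (∑ i ∈ s, G i) q = ∑ i ∈ s, G i q := by
  classical
  induction s using Finset.induction_on with
  | empty => simp
  | @insert a s ha ih => rw [Finset.sum_insert ha, Finset.sum_insert ha, Derivation.add_apply, ih]

theorem aux_deriv_eq_sum (D : AuxDer m) : D = ∑ i, (D (X i)) • pderiv i := by
  apply derivation_ext
  intro j
  rw [aux_sum_apply]
  simp [Derivation.smul_apply, pderiv_X, Pi.single_apply]

theorem aux_deriv_apply (D : AuxDer m) (q : AuxA m) :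
    D q = ∑ i, D (X i) * pderiv i q := by
  conv_lhs => rw [aux_deriv_eq_sum D]
  rw [aux_sum_apply]
  simp [Derivation.smul_apply, smul_eq_mul]

theorem aux_pderiv_mem {q : AuxA m} (hq : q ∈ AuxM m ^ 2) (j : Fin m) :
    pderiv j q ∈ AuxM m := by
  rw [pow_two] at hq
  refine Submodule.mul_induction_on hq ?_ ?_
  · intro a ha b hb
    rw [pderiv_mul]
    exact add_mem (Ideal.mul_mem_left _ _ hb) (Ideal.mul_mem_right _ _ ha)
  · intro a b ha hb
    rw [map_add]; exact add_mem ha hb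

/-- A derivation with all `D (X i) ∈ 𝔪²` maps everything into `𝔪²`. -/
theorem aux_deriv_mem_sq {D : AuxDer m} (hD : ∀ i, D (X i) ∈ AuxM m ^ 2) (q : AuxA m) :
    D q ∈ AuxM m ^ 2 := by
  rw [aux_deriv_apply]
  exact Submodule.sum_mem _ fun i _ => Ideal.mul_mem_right _ _ (hD i)

/-- A derivation with all `D (X i) ∈ 𝔪` maps `𝔪²` into `𝔪²`. -/
theorem aux_deriv_mem_sq' {D : AuxDer m} (hD : ∀ i, D (X i) ∈ AuxM m) {q : AuxA m}
    (hq : q ∈ AuxM m ^ 2) : D q ∈ AuxM m ^ 2 := by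
  rw [aux_deriv_apply, pow_two]
  exact Submodule.sum_mem _ fun i _ =>
    Ideal.mul_mem_mul (hD i) (aux_pderiv_mem hq i)

theorem aux_single_add_split {u v : Fin m →₀ ℕ} {k : Fin m}
    (h : u + v = Finsupp.single k 1) : u = 0 ∨ v = 0 := by
  by_cases hu : u k = 0
  · left; ext j
    have := DFunLike.congr_fun h j
    simp only [Finsupp.add_apply, Finsupp.coe_zero, Pi.zero_apply] at this ⊢
    rcases eq_or_ne j k with rfl | hj
    · omega
    · rw [Finsupp.single_eq_of_ne' (Ne.symm hj)] at this; omega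
  · right; ext j
    have := DFunLike.congr_fun h j
    simp only [Finsupp.add_apply, Finsupp.coe_zero, Pi.zero_apply] at this ⊢
    rcases eq_or_ne j k with rfl | hj
    · rw [Finsupp.single_eq_same] at this; omega
    · rw [Finsupp.single_eq_of_ne' (Ne.symm hj)] at this; omega

theorem aux_coeff_vanish {p : AuxA m} (hp : p ∈ AuxM m ^ 2) :
    coeff 0 p = 0 ∧ ∀ k, coeff (Finsupp.single k 1) p = 0 := by
  rw [pow_two] at hp
  refine Submodule.mul_induction_on hp ?_ ?_
  · intro a ha b hb
    rw [auxMem_iff] at ha hb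
    have ha0 : coeff 0 a = 0 := ha
    have hb0 : coeff 0 b = 0 := hb
    constructor
    · rw [coeff_mul]
      refine Finset.sum_eq_zero fun x hx => ?_
      have h : x.1 + x.2 = 0 := Finset.HasAntidiagonal.mem_antidiagonal.mp hx
      have h1 : x.1 = 0 := by
        ext j; have := DFunLike.congr_fun h j
        simp only [Finsupp.add_apply, Finsupp.coe_zero, Pi.zero_apply] at this ⊢; omega
      rw [h1, ha0, zero_mul]
    · intro k
      rw [coeff_mul]
      refine Finset.sum_eq_zero fun x hx => ?_
      have h : x.1 + x.2 = Finsupp.single k 1 := Finset.HasAntidiagonal.mem_antidiagonal.mp hx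
      rcases aux_single_add_split h with h1 | h2
      · rw [h1, ha0, zero_mul]
      · rw [h2, hb0, mul_zero]
  · intro a b ha hb
    exact ⟨by rw [coeff_add, ha.1, hb.1, add_zero],
      fun k => by rw [coeff_add, ha.2 k, hb.2 k, add_zero]⟩

theorem aux_monomial_mem_sq {α : Fin m →₀ ℕ} (c : ℂ)
    (h0 : α ≠ 0) (h1 : ∀ k, α ≠ Finsupp.single k 1) :
    (monomial α c : AuxA m) ∈ AuxM m ^ 2 := by
  obtain ⟨k, hk⟩ : ∃ k, α k ≠ 0 := by
    by_contra h; push_neg at h; exact h0 (Finsupp.ext fun j => h j)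
  have hle : Finsupp.single k 1 ≤ α := by
    rw [Finsupp.single_le_iff]; omega
  set β := α - Finsupp.single k 1 with hβ
  have hαβ : Finsupp.single k 1 + β = α := by
    rw [hβ, add_tsub_cancel_of_le hle]
  have hβ0 : β ≠ 0 := fun hc => h1 k (by rw [← hαβ, hc, add_zero])
  obtain ⟨l, hl⟩ : ∃ l, β l ≠ 0 := by
    by_contra h; push_neg at h; exact hβ0 (Finsupp.ext fun j => h j)
  have hle2 : Finsupp.single l 1 ≤ β := by
    rw [Finsupp.single_le_iff]; omega
  set γ := β - Finsupp.single l 1 with hγ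
  have hβγ : Finsupp.single l 1 + γ = β := by
    rw [hγ, add_tsub_cancel_of_le hle2]
  have key : (monomial α c : AuxA m) = X k * (X l * monomial γ c) := by
    rw [X, X, monomial_mul, monomial_mul, one_mul, one_mul, hβγ, hαβ]
  rw [key, pow_two]
  exact Ideal.mul_mem_mul (auxX_mem k) (Ideal.mul_mem_right _ _ (auxX_mem l))

theorem aux_mem_sq_of_coeff {p : AuxA m} (h0 : coeff 0 p = 0)
    (h1 : ∀ k, coeff (Finsupp.single k 1) p = 0) : p ∈ AuxM m ^ 2 := by
  rw [as_sum p]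
  refine Submodule.sum_mem _ fun α hα => ?_
  have hc : coeff α p ≠ 0 := mem_support_iff.mp hα
  exact aux_monomial_mem_sq _ (fun h => hc (h ▸ h0)) (fun k h => hc (h ▸ h1 k))

theorem aux_deg_ge_two {α : Fin m →₀ ℕ}
    (h0 : α ≠ 0) (h1 : ∀ k, α ≠ Finsupp.single k 1) : 2 ≤ ∑ j, α j := by
  obtain ⟨k, hk⟩ : ∃ k, α k ≠ 0 := by
    by_contra h; push_neg at h; exact h0 (Finsupp.ext fun j => h j)
  by_contra hS
  push_neg at hS
  have hks : α k ≤ ∑ j, α j :=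
    Finset.single_le_sum (fun j _ => Nat.zero_le _) (Finset.mem_univ k)
  have hsplit : α k + ∑ j ∈ Finset.univ.erase k, α j = ∑ j, α j :=
    Finset.add_sum_erase _ _ (Finset.mem_univ k)
  have herase : ∀ j ∈ Finset.univ.erase k, α j = 0 := by
    intro j hj
    have := (Finset.sum_eq_zero_iff).mp (by omega : ∑ j ∈ Finset.univ.erase k, α j = 0)
    exact this j hj
  refine h1 k (Finsupp.ext fun j => ?_)
  rcases eq_or_ne j k with rfl | hj
  · rw [Finsupp.single_eq_same]; omega
  · rw [Finsupp.single_eq_of_ne' (Ne.symm hj)]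
    exact herase j (Finset.mem_erase.mpr ⟨hj, Finset.mem_univ j⟩)

/-- The Euler derivation. -/
def AuxE (m : ℕ) : AuxDer m := ∑ j, (X j : AuxA m) • pderiv j

theorem auxE_apply (q : AuxA m) : AuxE m q = ∑ j, (X j : AuxA m) * pderiv j q := by
  rw [AuxE, aux_sum_apply]
  simp [Derivation.smul_apply, smul_eq_mul]

theorem auxE_X (j : Fin m) : AuxE m (X j) = X j := by
  rw [auxE_apply, Finset.sum_eq_single j]
  · simp
  · intro b _ hb; simp [pderiv_X, Pi.single_apply, hb]
  · simp

theorem aux_X_mul_pderiv_monomial (α : Fin m →₀ ℕ) (c : ℂ) (j : Fin m) :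
    (X j : AuxA m) * pderiv j (monomial α c) = ((α j : ℂ)) • monomial α c := by
  rw [pderiv_monomial]
  rcases Nat.eq_zero_or_pos (α j) with h | h
  · simp [h]
  · have hle : Finsupp.single j 1 ≤ α := by rw [Finsupp.single_le_iff]; omega
    rw [X, monomial_mul, one_mul, add_tsub_cancel_of_le hle, smul_monomial]
    rw [smul_eq_mul, mul_comm]

theorem auxE_monomial (α : Fin m →₀ ℕ) (c : ℂ) :
    AuxE m (monomial α c) = ((∑ j, α j : ℕ) : ℂ) • monomial α c := by
  rw [auxE_apply, Finset.sum_congr rfl fun j _ => aux_X_mul_pderiv_monomial α c j,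
    ← Finset.sum_smul]
  norm_cast

theorem aux_bracket_smul (q : AuxA m) (i : Fin m) :
    ⁅AuxE m, q • pderiv i⁆ = (AuxE m q - q) • (pderiv i : AuxDer m) := by
  apply derivation_ext
  intro j
  rw [Derivation.commutator_apply, Derivation.smul_apply, Derivation.smul_apply,
    Derivation.smul_apply, auxE_X]
  rcases eq_or_ne i j with rfl | hij
  · rw [pderiv_X, Pi.single_eq_same]
    simp
  · rw [pderiv_X, Pi.single_eq_of_ne (Ne.symm hij)]
    simp

theorem aux_bracket_monomial {α : Fin m →₀ ℕ} (c : ℂ) (i : Fin m) :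
    ⁅AuxE m, (monomial α c : AuxA m) • pderiv i⁆ =
      (((∑ j, α j : ℕ) : ℂ) - 1) • ((monomial α c : AuxA m) • pderiv i : AuxDer m) := by
  rw [aux_bracket_smul, auxE_monomial]
  apply derivation_ext
  intro j
  rw [Derivation.smul_apply, Derivation.smul_apply, Derivation.smul_apply, smul_eq_mul,
    sub_mul, smul_mul_assoc, sub_smul, one_smul, smul_eq_mul]

/-- The map from matrices to linear vector fields. -/
def AuxPhi (m : ℕ) : Matrix (Fin m) (Fin m) ℂ →ₗ[ℂ] AuxDer m where
  toFun B := ∑ k, ∑ i, B k i • ((X k : AuxA m) • pderiv i : AuxDer m)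
  map_add' B C := by
    simp [Matrix.add_apply, add_smul, Finset.sum_add_distrib]
  map_smul' c B := by
    simp [Matrix.smul_apply, smul_smul, Finset.smul_sum]

theorem auxPhi_apply_X (B : Matrix (Fin m) (Fin m) ℂ) (j : Fin m) :
    AuxPhi m B (X j) = ∑ k, B k j • (X k : AuxA m) := by
  show (∑ k, ∑ i, B k i • ((X k : AuxA m) • pderiv i : AuxDer m)) (X j) = _
  rw [aux_sum_apply]
  refine Finset.sum_congr rfl fun k _ => ?_
  rw [aux_sum_apply, Finset.sum_eq_single j]
  · rw [Derivation.smul_apply, Derivation.smul_apply, pderiv_X, Pi.single_eq_same,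
      smul_eq_mul, mul_one]
  · intro b _ hb
    rw [Derivation.smul_apply, Derivation.smul_apply, pderiv_X,
      Pi.single_eq_of_ne (Ne.symm hb)]
    simp
  · simp

theorem auxPhi_mem_L (B : Matrix (Fin m) (Fin m) ℂ) (j : Fin m) :
    AuxPhi m B (X j) ∈ AuxM m := by
  rw [auxPhi_apply_X, auxMem_iff, map_sum]
  refine Finset.sum_eq_zero fun k _ => ?_
  rw [constantCoeff_smul, constantCoeff_X, smul_zero]

theorem auxPhi_coeff (B : Matrix (Fin m) (Fin m) ℂ) (j l : Fin m) :
    coeff (Finsupp.single l 1) (AuxPhi m B (X j)) = B l j := by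
  classical
  rw [auxPhi_apply_X]
  rw [coeff_sum]
  rw [Finset.sum_congr rfl fun k _ => coeff_smul (Finsupp.single l 1) (B k j) (X k : AuxA m)]
  rw [Finset.sum_eq_single l]
  · rw [coeff_X', if_pos rfl, smul_eq_mul, mul_one]
  · intro b _ hb
    rw [coeff_X', if_neg, smul_zero]
    intro hc
    exact hb ((Finsupp.single_left_injective one_ne_zero) hc)
  · simp

theorem auxPhi_bracket (B C : Matrix (Fin m) (Fin m) ℂ) :
    ⁅AuxPhi m B, AuxPhi m C⁆ = AuxPhi m (B * C - C * B) := by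
  apply derivation_ext
  intro j
  rw [Derivation.commutator_apply, auxPhi_apply_X, auxPhi_apply_X, map_sum, map_sum]
  simp only [Derivation.map_smul, auxPhi_apply_X]
  simp only [Matrix.sub_apply, Matrix.mul_apply, sub_smul, Finset.sum_smul,
    Finset.smul_sum, smul_smul, Finset.sum_sub_distrib]
  congr 1
  · rw [Finset.sum_comm]
    exact Finset.sum_congr rfl fun k _ => Finset.sum_congr rfl fun l _ => by rw [mul_comm]
  · rw [Finset.sum_comm]
    exact Finset.sum_congr rfl fun k _ => Finset.sum_congr rfl fun l _ => by rw [mul_comm]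

theorem auxPhi_std (k i : Fin m) :
    AuxPhi m (Matrix.single k i 1) = ((X k : AuxA m) • pderiv i : AuxDer m) := by
  show (∑ a, ∑ b, Matrix.single k i 1 a b • ((X a : AuxA m) • pderiv b : AuxDer m)) = _
  rw [Finset.sum_eq_single k]
  · rw [Finset.sum_eq_single i]
    · simp [Matrix.single]
    · intro b _ hb; simp [Matrix.single, Ne.symm hb]
    · simp
  · intro a _ ha
    refine Finset.sum_eq_zero fun b _ => ?_
    simp [Matrix.single, Ne.symm ha]
  · simp

theorem aux_shift {V : Type*} [AddCommGroup V] [Module ℂ V] (f g : Module.End ℂ V)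
    (c lam : ℂ) (h : f * g - g * f = c • g) {v : V} (hv : f v = lam • v) :
    f (g v) = (lam + c) • g v := by
  have h' := LinearMap.congr_fun h v
  simp only [LinearMap.sub_apply, Module.End.mul_apply, LinearMap.smul_apply] at h'
  have hg : g (f v) = lam • g v := by rw [hv, map_smul]
  rw [hg] at h'
  rw [add_smul]
  have := sub_eq_iff_eq_add.mp h'
  rw [this, add_comm]

end AuxSect

open MvPolynomial

/-- Let `L = {D ∈ W : D(t_i) ∈ 𝔪}` and `I = {D ∈ W : D(t_i) ∈ 𝔪²}`.
If `V` is a finite-dimensional simple Lie module over `L` (the `L`-action is encoded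
by a linear map `ρ` on derivations which is a Lie homomorphism on `L`), then `I`
annihilates `V`; consequently `V` is a simple module over `L/I ≅ gl(m,ℂ)`. -/
theorem ideal_annihilates_finite_dimensional_simple_module
    (m : ℕ) (hm : 1 ≤ m)
    (V : Type*) [AddCommGroup V] [Module ℂ V] [Nontrivial V]
    [FiniteDimensional ℂ V]
    (ρ : Derivation ℂ (MvPolynomial (Fin m) ℂ) (MvPolynomial (Fin m) ℂ) →ₗ[ℂ]
      Module.End ℂ V)
    (hLie : ∀ D E : Derivation ℂ (MvPolynomial (Fin m) ℂ) (MvPolynomial (Fin m) ℂ),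
      (∀ i, D (X i) ∈ RingHom.ker (eval (0 : Fin m → ℂ))) →
      (∀ i, E (X i) ∈ RingHom.ker (eval (0 : Fin m → ℂ))) →
      ρ ⁅D, E⁆ = ρ D * ρ E - ρ E * ρ D)
    (hsimple : ∀ U : Submodule ℂ V,
      (∀ D : Derivation ℂ (MvPolynomial (Fin m) ℂ) (MvPolynomial (Fin m) ℂ),
        (∀ i, D (X i) ∈ RingHom.ker (eval (0 : Fin m → ℂ))) →
        ∀ v ∈ U, ρ D v ∈ U) →
      U = ⊥ ∨ U = ⊤) :
    (∀ D : Derivation ℂ (MvPolynomial (Fin m) ℂ) (MvPolynomial (Fin m) ℂ),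
      (∀ i, D (X i) ∈ (RingHom.ker (eval (0 : Fin m → ℂ))) ^ 2) →
      ∀ v : V, ρ D v = 0) ∧
    ∃ τ : Matrix (Fin m) (Fin m) ℂ →ₗ[ℂ] Module.End ℂ V,
      (∀ B C : Matrix (Fin m) (Fin m) ℂ,
        τ (B * C - C * B) = τ B * τ C - τ C * τ B) ∧
      (∀ k i : Fin m,
        τ (Matrix.single k i 1) = ρ ((X k : MvPolynomial (Fin m) ℂ) • pderiv i)) ∧
      (∀ U : Submodule ℂ V,
        (∀ B : Matrix (Fin m) (Fin m) ℂ, ∀ v ∈ U, τ B v ∈ U) → U = ⊥ ∨ U = ⊤) := by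
  classical
  set f := ρ (AuxE m) with hf
  have hE_L : ∀ i, AuxE m (X i) ∈ AuxM m := fun i => by rw [auxE_X]; exact auxX_mem i
  obtain ⟨μ0, hμ0⟩ := Module.End.exists_eigenvalue f
  have hfin := Module.End.finite_hasEigenvalue f
  obtain ⟨lam, hlammem, hmax⟩ :=
    hfin.toFinset.exists_max_image Complex.re ⟨μ0, hfin.mem_toFinset.mpr hμ0⟩
  have hlam : f.HasEigenvalue lam := hfin.mem_toFinset.mp hlammem
  obtain ⟨v0, hv0⟩ := hlam.exists_hasEigenvector
  have hv0e : f v0 = lam • v0 := Module.End.mem_eigenspace_iff.mp hv0.1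
  -- any `G ∈ L` with `⁅E, G⁆ = c • G`, `re c ≥ 1`, kills `v0`
  have kill : ∀ (G : AuxDer m) (c : ℂ), (∀ i, G (X i) ∈ AuxM m) → 1 ≤ c.re →
      ⁅AuxE m, G⁆ = c • G → ρ G v0 = 0 := by
    intro G c hGL hc hbr
    by_contra hne
    have hρ : ρ ⁅AuxE m, G⁆ = f * ρ G - ρ G * f := hLie _ _ hE_L hGL
    rw [hbr, map_smul] at hρ
    have hshift : f (ρ G v0) = (lam + c) • (ρ G v0) := aux_shift f (ρ G) c lam hρ.symm hv0e
    have hev : f.HasEigenvalue (lam + c) := Module.End.hasEigenvalue_of_hasEigenvector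
      ⟨Module.End.mem_eigenspace_iff.mpr hshift, hne⟩
    have hle := hmax _ (hfin.mem_toFinset.mpr hev)
    rw [Complex.add_re] at hle
    linarith
  -- monomial pieces of elements of `I` kill `v0`
  have mono_kill : ∀ (α : Fin m →₀ ℕ) (c : ℂ) (i : Fin m), α ≠ 0 →
      (∀ k, α ≠ Finsupp.single k 1) →
      ρ ((monomial α c : AuxA m) • pderiv i) v0 = 0 := by
    intro α c i h0 h1
    have hd := aux_deg_ge_two h0 h1
    refine kill _ (((∑ j, α j : ℕ) : ℂ) - 1) ?_ ?_ (aux_bracket_monomial c i)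
    · intro jj
      rw [Derivation.smul_apply, smul_eq_mul]
      exact Ideal.mul_mem_right _ _ (by rw [auxMem_iff, constantCoeff_monomial, if_neg h0])
    · rw [Complex.sub_re, Complex.natCast_re, Complex.one_re]
      have h2 : (2 : ℝ) ≤ ((∑ j, α j : ℕ) : ℝ) := by exact_mod_cast hd
      linarith
  -- elements of `I` kill `v0`
  have hv0kill : ∀ D : AuxDer m, (∀ i, D (X i) ∈ AuxM m ^ 2) → ρ D v0 = 0 := by
    intro D hD
    have hDsum : D = ∑ i, ∑ α ∈ (D (X i)).support,
        ((monomial α (coeff α (D (X i))) : AuxA m) • pderiv i : AuxDer m) := by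
      conv_lhs => rw [aux_deriv_eq_sum D]
      refine Finset.sum_congr rfl fun i _ => ?_
      conv_lhs => rw [as_sum (D (X i))]
      rw [Finset.sum_smul]
    rw [hDsum, map_sum, LinearMap.sum_apply]
    refine Finset.sum_eq_zero fun i _ => ?_
    rw [map_sum, LinearMap.sum_apply]
    refine Finset.sum_eq_zero fun α hα => ?_
    have hc : coeff α (D (X i)) ≠ 0 := mem_support_iff.mp hα
    have hcv := aux_coeff_vanish (hD i)
    exact mono_kill α _ i (fun h => hc (h ▸ hcv.1)) (fun k h => hc (h ▸ hcv.2 k))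
  -- the common-kernel submodule
  let U : Submodule ℂ V :=
    { carrier := {v | ∀ D : AuxDer m, (∀ i, D (X i) ∈ AuxM m ^ 2) → ρ D v = 0}
      add_mem' := fun ha hb D hD => by rw [map_add, ha D hD, hb D hD, add_zero]
      zero_mem' := fun D _ => map_zero _
      smul_mem' := fun c v hv D hD => by rw [map_smul, hv D hD, smul_zero] }
  have hUinv : ∀ D' : AuxDer m, (∀ i, D' (X i) ∈ RingHom.ker (eval (0 : Fin m → ℂ))) →
      ∀ v ∈ U, ρ D' v ∈ U := by
    intro D' hD' v hv D hD
    have hbr : ∀ i, (⁅D, D'⁆ : AuxDer m) (X i) ∈ AuxM m ^ 2 := by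
      intro i
      rw [Derivation.commutator_apply]
      exact sub_mem (aux_deriv_mem_sq hD _) (aux_deriv_mem_sq' hD' (hD i))
    have hDL : ∀ i, D (X i) ∈ AuxM m := fun i => (Ideal.pow_le_self two_ne_zero) (hD i)
    have h1 := hLie D D' hDL hD'
    have h2 := LinearMap.congr_fun h1 v
    simp only [LinearMap.sub_apply, Module.End.mul_apply] at h2
    have h3 : ρ D v = 0 := hv D hD
    have h4 : ρ ⁅D, D'⁆ v = 0 := hv _ hbr
    rw [h4, h3, map_zero, sub_zero] at h2
    exact h2.symm
  have hUtop : U = ⊤ := by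
    rcases hsimple U hUinv with h | h
    · exfalso
      have : v0 ∈ U := fun D hD => hv0kill D hD
      rw [h, Submodule.mem_bot] at this
      exact hv0.2 this
    · exact h
  have part1 : ∀ D : Derivation ℂ (MvPolynomial (Fin m) ℂ) (MvPolynomial (Fin m) ℂ),
      (∀ i, D (X i) ∈ (RingHom.ker (eval (0 : Fin m → ℂ))) ^ 2) →
      ∀ v : V, ρ D v = 0 := by
    intro D hD v
    have hvU : v ∈ U := by rw [hUtop]; exact Submodule.mem_top
    exact hvU D hD
  refine ⟨part1, ρ.comp (AuxPhi m), ?_, ?_, ?_⟩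
  · intro B C
    rw [LinearMap.comp_apply, LinearMap.comp_apply, LinearMap.comp_apply,
      ← auxPhi_bracket]
    exact hLie _ _ (auxPhi_mem_L B) (auxPhi_mem_L C)
  · intro k i
    rw [LinearMap.comp_apply, auxPhi_std]
  · intro U' hU'
    refine hsimple U' ?_
    intro D hDL v hvU'
    set B : Matrix (Fin m) (Fin m) ℂ :=
      Matrix.of fun k i => coeff (Finsupp.single k 1) (D (X i)) with hB
    have hdiff : ∀ i, (D - AuxPhi m B) (X i) ∈ AuxM m ^ 2 := by
      intro i
      rw [Derivation.sub_apply]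
      refine aux_mem_sq_of_coeff ?_ ?_
      · rw [coeff_sub]
        have h1 : coeff 0 (D (X i)) = 0 := (auxMem_iff _).mp (hDL i)
        have h2 : coeff 0 (AuxPhi m B (X i)) = 0 := (auxMem_iff _).mp (auxPhi_mem_L B i)
        rw [h1, h2, sub_zero]
      · intro k
        rw [coeff_sub, auxPhi_coeff]
        rw [hB]
        simp [Matrix.of_apply]
    have hsplit : ρ D v = ρ (AuxPhi m B) v + ρ (D - AuxPhi m B) v := by
      rw [← LinearMap.add_apply, ← map_add, add_sub_cancel]
    rw [hsplit, part1 _ hdiff v, add_zero]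
    exact hU' B v hvU'
end
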